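/- arXiv:1809.00133 — 3 statements merged into one kernel-verified Lean document; each statement's English description precedes it below -/
import Mathlib

section
/- Assume the syzygy graph G_I is a tree. Then the following are equivalent: (i) I has linear relations; (ii) I is variable-decomposable; (iii) I has linear quotients. -/
open MvPolynomial Finset

attribute [local instance] Classical.propDecidable

/-- The (first linear) syzygy graph of a squarefree monomial ideal whose generators
have supports `F i`, all of cardinality `d`: vertices are the generators, and two
generators are adjacent iff their supports meet in `d - 1` elements (equivalently,
there are variables `x, y` with `x * u i = y * u j`). -/
def syzGraph {n m : ℕ} (F : Fin m → Finset (Fin n)) (d : ℕ) : SimpleGraph (Fin m) where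
  Adj i j := i ≠ j ∧ (F i ∩ F j).card + 1 = d
  symm := by
    constructor
    intro i j h
    exact ⟨h.1.symm, by rw [Finset.inter_comm]; exact h.2⟩
  loopless := by constructor; intro i h; exact h.1 rfl

/-- The map `φ : S^ι → S`, `e i ↦ u i`. -/
noncomputable def phi {R : Type*} [CommRing R] {ι : Type*} [Fintype ι] (u : ι → R) :
    (ι → R) →ₗ[R] R where
  toFun c := ∑ i, c i * u i
  map_add' a b := by simp [add_mul, Finset.sum_add_distrib]
  map_smul' r a := by simp [Finset.mul_sum, mul_assoc]

/-- The set of linear syzygies `x_a e_i - x_b e_j` with `x_a u_i = x_b u_j`. -/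
def linSyz {k : Type*} [Field k] {n : ℕ} {ι : Type*} [DecidableEq ι]
    (u : ι → MvPolynomial (Fin n) k) : Set (ι → MvPolynomial (Fin n) k) :=
  { w | ∃ (i j : ι) (a b : Fin n), X a * u i = X b * u j ∧
      w = Pi.single i (X a) - Pi.single j (X b) }

/-- `I = (u i : i)` has linear relations: `ker φ` is generated by the linear syzygies. -/
def HasLinRel {k : Type*} [Field k] {n : ℕ} {ι : Type*} [Fintype ι] [DecidableEq ι]
    (u : ι → MvPolynomial (Fin n) k) : Prop :=
  Submodule.span (MvPolynomial (Fin n) k) (linSyz u) = LinearMap.ker (phi u)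

/-- `I = (u 1, …, u m)` has linear quotients: for some ordering of the generators, each
colon ideal `(u_{σ 1}, …, u_{σ (i-1)}) : u_{σ i}` is generated by a subset of the variables. -/
def LinQuot {k : Type*} [Field k] {n m : ℕ} (u : Fin m → MvPolynomial (Fin n) k) : Prop :=
  ∃ σ : Equiv.Perm (Fin m), ∀ i : Fin m, i.val ≠ 0 →
    ∃ T : Set (Fin n),
      Submodule.colon (Ideal.span ((fun j => u (σ j)) '' {j : Fin m | j < i}))
        (Ideal.span {u (σ i)}) = Ideal.span (X '' T)

/-- Variable-decomposability of a monomial ideal given by its (finite) minimal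
generating set `G`: either `G` is a singleton (principal ideal), or there is a shedding
variable `x l` such that both `I_{x l}` and `I^{x l}` are variable-decomposable. -/
inductive VarDecomp {k : Type*} [Field k] {n : ℕ} :
    Finset (MvPolynomial (Fin n) k) → Prop
  | principal (u : MvPolynomial (Fin n) k) : VarDecomp {u}
  | shed (G : Finset (MvPolynomial (Fin n) k)) (l : Fin n)
      (hne : (G.filter fun u => ¬ X l ∣ u).Nonempty)
      (hshed : ∀ u ∈ G.filter (fun u => ¬ X l ∣ u),
        ∃ v ∈ G.filter (fun u => X l ∣ u),
          Submodule.colon (Ideal.span {v}) (Ideal.span {u}) = Ideal.span {X l})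
      (h1 : VarDecomp (G.filter fun u => ¬ X l ∣ u))
      (h2 : VarDecomp (G.filter fun u => X l ∣ u)) : VarDecomp G


namespace Stmt11Aux

variable {k : Type*} [Field k] {n : ℕ}

/-- exponent vector of a squarefree monomial with support `S` -/
noncomputable def D (S : Finset (Fin n)) : Fin n →₀ ℕ :=
  ∑ l ∈ S, Finsupp.single l 1

theorem D_apply (S : Finset (Fin n)) (a : Fin n) :
    D S a = if a ∈ S then 1 else 0 := by
  classical
  rw [D, Finsupp.finset_sum_apply]
  split_ifs with h
  · rw [Finset.sum_eq_single a]
    · simp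
    · intro b hb hba; simp [Finsupp.single_apply, hba]
    · intro h'; exact absurd h h'
  · apply Finset.sum_eq_zero
    intro b hb
    have : b ≠ a := fun e => h (e ▸ hb)
    simp [Finsupp.single_apply, this]

theorem single_le_D_iff {S : Finset (Fin n)} {l : Fin n} :
    Finsupp.single l 1 ≤ D S ↔ l ∈ S := by
  rw [Finsupp.single_le_iff, D_apply]
  split_ifs with h <;> simp [h]

theorem D_singleton (t : Fin n) : D ({t} : Finset (Fin n)) = Finsupp.single t 1 := by
  rw [D, Finset.sum_singleton]

theorem D_le_D_iff {S T : Finset (Fin n)} : D S ≤ D T ↔ S ⊆ T := by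
  constructor
  · intro h a ha
    have := h a
    rw [D_apply, D_apply, if_pos ha] at this
    split_ifs at this with h'
    · exact h'
    · omega
  · intro h a
    rw [D_apply, D_apply]
    split_ifs with h1 h2
    · omega
    · exact absurd (h h1) h2
    · omega
    · omega

theorem D_inj : Function.Injective (D (n := n)) := by
  intro S T h
  exact le_antisymm (D_le_D_iff.1 h.le) (D_le_D_iff.1 h.ge)

theorem D_add_D (S T : Finset (Fin n)) (h : Disjoint S T) :
    D S + D T = D (S ∪ T) := by
  ext a
  rw [Finsupp.add_apply, D_apply, D_apply, D_apply]
  have hd : a ∈ S → a ∉ T := fun hs ht => Finset.disjoint_left.1 h hs ht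
  by_cases h1 : a ∈ S <;> by_cases h2 : a ∈ T <;>
    simp_all [Finset.mem_union]

theorem prod_X_eq_monomial (S : Finset (Fin n)) :
    (∏ l ∈ S, (X l : MvPolynomial (Fin n) k)) = monomial (D S) 1 := by
  classical
  induction S using Finset.induction with
  | empty => simp [D, monomial_zero']
  | insert a s h ih =>
      rw [Finset.prod_insert h, ih, X, monomial_mul, one_mul]
      congr 1
      rw [D, D, Finset.sum_insert h]


theorem monomial_dvd_iff {b : Fin n →₀ ℕ} {f : MvPolynomial (Fin n) k} :
    monomial b (1 : k) ∣ f ↔ ∀ e ∈ f.support, b ≤ e := by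
  rw [← Ideal.mem_span_singleton]
  have : ({monomial b (1 : k)} : Set (MvPolynomial (Fin n) k))
      = (fun s => monomial s (1 : k)) '' {b} := by simp
  rw [this, mem_ideal_span_monomial_image]
  simp

theorem mem_support_mul_monomial {f : MvPolynomial (Fin n) k} {c e : Fin n →₀ ℕ}
    (he : e ∈ f.support) : e + c ∈ (f * monomial c (1 : k)).support := by
  rw [mem_support_iff] at he ⊢
  rw [coeff_mul_monomial, mul_one]
  exact he

theorem monomial_mul_monomial (a b : Fin n →₀ ℕ) :
    (monomial a (1 : k)) * monomial b 1 = monomial (a + b) 1 := by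
  rw [monomial_mul, one_mul]

section Main

variable {m d : ℕ} (F : Fin m → Finset (Fin n))

/-- the generators as monomials -/
noncomputable def u (i : Fin m) : MvPolynomial (Fin n) k := monomial (D (F i)) 1

theorem u_eq_prod (i : Fin m) : (∏ l ∈ F i, (X l : MvPolynomial (Fin n) k)) = u F i :=
  prod_X_eq_monomial _

theorem u_inj (hinj : Function.Injective F) :
    Function.Injective (u (k := k) F) := by
  intro i j h
  rw [u, u, monomial_eq_monomial_iff] at h
  rcases h with ⟨h, -⟩ | ⟨h, -⟩
  · exact hinj (D_inj h)
  · exact absurd h one_ne_zero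

theorem X_dvd_u_iff {l : Fin n} {i : Fin m} : (X l : MvPolynomial (Fin n) k) ∣ u F i ↔ l ∈ F i := by
  rw [X, u, monomial_dvd_iff]
  rw [support_monomial, if_neg (one_ne_zero)]
  constructor
  · intro h
    exact single_le_D_iff.1 (h _ (Finset.mem_singleton_self _))
  · intro h e he
    rw [Finset.mem_singleton] at he
    subst he
    exact single_le_D_iff.2 h

theorem mem_span_u_image {s : Set (Fin m)} {f : MvPolynomial (Fin n) k} :
    f ∈ Ideal.span ((fun j => u F j) '' s) ↔ ∀ e ∈ f.support, ∃ j ∈ s, D (F j) ≤ e := by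
  have h1 : ((fun j => u (k := k) F j) '' s)
      = (fun c => monomial c (1 : k)) '' ((fun j => D (F j)) '' s) := by
    rw [Set.image_image]; rfl
  rw [h1, mem_ideal_span_monomial_image]
  constructor
  · intro h e he
    obtain ⟨si, hsi, hle⟩ := h e he
    obtain ⟨j, hj, rfl⟩ := hsi
    exact ⟨j, hj, hle⟩
  · intro h e he
    obtain ⟨j, hj, hle⟩ := h e he
    exact ⟨D (F j), ⟨j, hj, rfl⟩, hle⟩

variable {F}

section Cards

variable (hinj : Function.Injective F) (hcard : ∀ i, (F i).card = d)

include hcard in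
theorem inter_card_of_subset {i j : Fin m} {t : Fin n} (hij : F i ≠ F j)
    (h : F j ⊆ F i ∪ {t}) (ht : t ∉ F i) : (F i ∩ F j).card + 1 = d := by
  have htj : t ∈ F j := by
    by_contra htj
    have hsub : F j ⊆ F i := by
      intro x hx
      rcases Finset.mem_union.1 (h hx) with h' | h'
      · exact h'
      · exact absurd (Finset.mem_singleton.1 h' ▸ hx) htj
    exact hij ((Finset.eq_of_subset_of_card_le hsub (by rw [hcard i, hcard j])).symm)
  have hkey : F i ∩ F j = (F j).erase t := by
    apply Finset.ext
    intro x
    constructor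
    · intro hx
      rcases Finset.mem_inter.1 hx with ⟨h1, h2⟩
      exact Finset.mem_erase.2 ⟨fun e => ht (e ▸ h1), h2⟩
    · intro hx
      rcases Finset.mem_erase.1 hx with ⟨hxt, hxj⟩
      rcases Finset.mem_union.1 (h hxj) with h' | h'
      · exact Finset.mem_inter.2 ⟨h', hxj⟩
      · exact absurd (Finset.mem_singleton.1 h') hxt
  have hd : 1 ≤ d := by
    rw [← hcard j]
    exact Finset.card_pos.2 ⟨t, htj⟩
  rw [hkey, Finset.card_erase_of_mem htj, hcard j]
  omega

include hcard in
theorem adj_sdiff {i j : Fin m} (h : (syzGraph F d).Adj i j) :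
    ∃ a, F j \ F i = {a} := by
  rw [← Finset.card_eq_one]
  have h2 := h.2
  have := Finset.card_sdiff_add_card_inter (F j) (F i)
  rw [Finset.inter_comm] at this
  rw [hcard j] at this
  omega

omit hcard in
theorem adj_union {i j : Fin m} {a : Fin n}
    (ha : F j \ F i = {a}) : F i ∪ F j = F i ∪ {a} := by
  rw [← Finset.union_sdiff_self_eq_union, ha]

end Cards


/-- linear connectivity: any two generators are joined by a walk all of whose
vertices have support inside the union of the endpoints' supports. -/
def LC (F : Fin m → Finset (Fin n)) (d : ℕ) : Prop :=
  ∀ i j : Fin m, ∃ w : (syzGraph F d).Walk i j, ∀ t ∈ w.support, F t ⊆ F i ∪ F j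

section E

variable (hinj : Function.Injective F) (hcard : ∀ i, (F i).card = d)

include hinj hcard in
theorem lc_of_linQuot (h : LinQuot (fun i : Fin m => ∏ l ∈ F i, (X l : MvPolynomial (Fin n) k))) :
    LC F d := by
  have hu : (fun i : Fin m => ∏ l ∈ F i, (X l : MvPolynomial (Fin n) k)) = u F :=
    funext fun i => u_eq_prod F i
  rw [hu] at h
  obtain ⟨σ, hσ⟩ := h
  have key : ∀ N : ℕ, ∀ i j : Fin m, (σ.symm i).val < N → (σ.symm j).val < N →
      ∃ w : (syzGraph F d).Walk i j, ∀ t ∈ w.support, F t ⊆ F i ∪ F j := by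
    intro N
    induction N with
    | zero => intro i j h1 _; exact absurd h1 (Nat.not_lt_zero _)
    | succ N ih =>
      have main : ∀ i j : Fin m, (σ.symm i).val < N → (σ.symm j).val = N →
          ∃ w : (syzGraph F d).Walk i j, ∀ t ∈ w.support, F t ⊆ F i ∪ F j := by
        intro i j h1 h2
        have hp2ne : (σ.symm j).val ≠ 0 := by omega
        obtain ⟨T, hT⟩ := hσ (σ.symm j) hp2ne
        simp only [Equiv.apply_symm_apply] at hT
        have hp12 : σ.symm i ≠ σ.symm j := fun e => by rw [e] at h1; omega
        have hne : i ≠ j := fun e => hp12 (congrArg σ.symm e)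
        have hFne : F i ≠ F j := fun e => hne (hinj e)
        set A := F i with hA
        set B := F j with hB
        have himg : ((fun j' => u (k := k) F (σ j')) '' {j' : Fin m | j' < σ.symm j})
            = (fun j' => u (k := k) F j') '' (σ '' {j' : Fin m | j' < σ.symm j}) := by
          rw [Set.image_image]
        have hAB : Disjoint (A \ B) B := Finset.sdiff_disjoint
        have hABunion : (A \ B) ∪ B = A ∪ B := Finset.sdiff_union_self_eq_union
        have hprod : (monomial (D (A \ B)) (1 : k)) * u F j = monomial (D (A ∪ B)) 1 := by
          rw [u, monomial_mul_monomial, D_add_D _ _ hAB, hABunion]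
        have hg : (monomial (D (A \ B)) (1 : k)) ∈
            Submodule.colon
              (Ideal.span ((fun j' => u (k := k) F (σ j')) '' {j' : Fin m | j' < σ.symm j}))
              (Ideal.span {u (k := k) F j}) := by
          rw [Ideal.mem_colon_span_singleton, hprod, himg, mem_span_u_image]
          intro e he
          rw [support_monomial, if_neg one_ne_zero, Finset.mem_singleton] at he
          subst he
          refine ⟨i, ⟨σ.symm i, ?_, by simp⟩, D_le_D_iff.2 (Finset.subset_union_left)⟩
          exact Fin.lt_def.2 (by omega)
        rw [hT] at hg
        have hABne : (A \ B).Nonempty := by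
          rw [Finset.sdiff_nonempty]
          intro hsub
          exact hFne (Finset.eq_of_subset_of_card_le hsub
            (le_of_eq ((hcard _).trans (hcard _).symm)))
        obtain ⟨t, htT, ht⟩ : ∃ t ∈ T, t ∈ A \ B := by
          rw [mem_ideal_span_X_image] at hg
          obtain ⟨t, htT, hne0⟩ := hg (D (A \ B)) (by
            rw [support_monomial, if_neg one_ne_zero]; exact Finset.mem_singleton_self _)
          refine ⟨t, htT, ?_⟩
          rw [D_apply] at hne0
          by_contra hmem
          rw [if_neg hmem] at hne0
          exact hne0 rfl
        have htA : t ∈ A := (Finset.mem_sdiff.1 ht).1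
        have htB : t ∉ B := (Finset.mem_sdiff.1 ht).2
        have hXt : (X t : MvPolynomial (Fin n) k) ∈ Ideal.span (X '' T) :=
          Ideal.subset_span ⟨t, htT, rfl⟩
        rw [← hT, Ideal.mem_colon_span_singleton] at hXt
        have hdisj2 : Disjoint ({t} : Finset (Fin n)) B := by
          simpa using htB
        have hXtu : (X t : MvPolynomial (Fin n) k) * u F j
            = monomial (D ({t} ∪ B)) 1 := by
          rw [X, u, monomial_mul_monomial, ← D_add_D _ _ hdisj2, D_singleton]
        rw [hXtu, himg, mem_span_u_image] at hXt
        obtain ⟨j', hj', hle⟩ := hXt (D ({t} ∪ B)) (by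
          rw [support_monomial, if_neg one_ne_zero]; exact Finset.mem_singleton_self _)
        obtain ⟨p', hp', rfl⟩ := hj'
        have hp'N : (σ.symm (σ p')).val < N := by
          have := Fin.lt_def.1 hp'
          simp only [Equiv.symm_apply_apply]
          omega
        have hsub' : F (σ p') ⊆ B ∪ {t} := by
          have := D_le_D_iff.1 hle
          rwa [Finset.union_comm] at this
        have hFne' : F j ≠ F (σ p') := by
          intro e
          have : j = σ p' := hinj e
          rw [this] at hp'
          simp at hp'
        have hadj : (syzGraph F d).Adj j (σ p') := by
          refine ⟨fun e => hFne' (congrArg F e), ?_⟩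
          exact inter_card_of_subset hcard hFne' hsub' htB
        have hsub'' : F (σ p') ⊆ A ∪ B := by
          refine hsub'.trans ?_
          intro x hx
          rcases Finset.mem_union.1 hx with h' | h'
          · exact Finset.mem_union.2 (Or.inr h')
          · rw [Finset.mem_singleton] at h'
            exact Finset.mem_union.2 (Or.inl (h' ▸ htA))
        obtain ⟨w1, hw1⟩ := ih i (σ p') (by simpa using h1) hp'N
        refine ⟨w1.concat hadj.symm, ?_⟩
        intro t' ht'
        rw [SimpleGraph.Walk.support_concat, List.mem_append] at ht'
        rcases ht' with ht' | ht'
        · refine (hw1 t' ht').trans ?_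
          intro x hx
          rcases Finset.mem_union.1 hx with h' | h'
          · exact Finset.mem_union.2 (Or.inl h')
          · exact hsub'' h'
        · rw [List.mem_singleton] at ht'
          subst ht'
          exact Finset.subset_union_right
      intro i j h1 h2
      rcases Nat.lt_or_ge (σ.symm i).val N with hp1 | hp1
      · rcases Nat.lt_or_ge (σ.symm j).val N with hp2 | hp2
        · exact ih i j hp1 hp2
        · exact main i j hp1 (by omega)
      · rcases Nat.lt_or_ge (σ.symm j).val N with hp2 | hp2
        · obtain ⟨w, hw⟩ := main j i hp2 (by omega)
          exact ⟨w.reverse, fun t ht => by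
            rw [SimpleGraph.Walk.support_reverse, List.mem_reverse] at ht
            exact (hw t ht).trans (by rw [Finset.union_comm])⟩
        · have : i = j := by
            have : σ.symm i = σ.symm j := Fin.ext (by omega)
            simpa using congrArg σ this
          subst this
          exact ⟨SimpleGraph.Walk.nil, fun t ht => by
            rw [SimpleGraph.Walk.support_nil, List.mem_singleton] at ht
            subst ht
            exact Finset.subset_union_left⟩
  intro i j
  exact key m i j (σ.symm i).isLt (σ.symm j).isLt

end E

section ColonLemmas

variable (hinj : Function.Injective F) (hcard : ∀ i, (F i).card = d)

theorem monomial_dvd_monomial_one {b c : Fin n →₀ ℕ} :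
    monomial b (1 : k) ∣ monomial c (1 : k) ↔ b ≤ c := by
  rw [monomial_dvd_iff, support_monomial, if_neg one_ne_zero]
  constructor
  · intro h; exact h c (Finset.mem_singleton_self _)
  · intro h e he; rw [Finset.mem_singleton] at he; subst he; exact h

/-- forward computation of the colon ideal of two adjacent generators -/
theorem colon_singleton_eq {i p : Fin m} {l : Fin n} (hdiff : F p \ F i = {l})
    (hl : l ∉ F i) :
    Submodule.colon (Ideal.span {u (k := k) F p}) (Ideal.span {u (k := k) F i})
      = Ideal.span {(X l : MvPolynomial (Fin n) k)} := by
  apply le_antisymm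
  · intro f hf
    rw [Ideal.mem_colon_span_singleton, Ideal.mem_span_singleton, u, u] at hf
    rw [Ideal.mem_span_singleton, X]
    rw [monomial_dvd_iff] at hf ⊢
    intro e he
    have h2 := hf (e + D (F i)) (mem_support_mul_monomial he)
    have h3 := h2 l
    rw [Finsupp.add_apply, D_apply, D_apply, if_neg hl] at h3
    have hlp : l ∈ F p := by
      have : l ∈ F p \ F i := hdiff ▸ Finset.mem_singleton_self l
      exact (Finset.mem_sdiff.1 this).1
    rw [if_pos hlp] at h3
    rw [Finsupp.single_le_iff]
    omega
  · rw [Ideal.span_le, Set.singleton_subset_iff]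
    rw [SetLike.mem_coe, Ideal.mem_colon_span_singleton, Ideal.mem_span_singleton, X, u, u,
      monomial_mul_monomial, monomial_dvd_monomial_one]
    intro a
    rw [Finsupp.add_apply, D_apply, D_apply, Finsupp.single_apply]
    by_cases hap : a ∈ F p
    · by_cases hai : a ∈ F i
      · simp [hai, hap]
      · have : a ∈ F p \ F i := Finset.mem_sdiff.2 ⟨hap, hai⟩
        rw [hdiff, Finset.mem_singleton] at this
        subst this
        simp [hap, hai]
    · simp [hap]

/-- reading off the combinatorics from a colon ideal identity -/
theorem diff_eq_of_colon {i p : Fin m} {l : Fin n} (hne : F i ≠ F p)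
    (hcolon : Submodule.colon (Ideal.span {u (k := k) F p}) (Ideal.span {u (k := k) F i})
      = Ideal.span {(X l : MvPolynomial (Fin n) k)}) :
    F p \ F i = {l} := by
  have hmem : (monomial (D (F p \ F i)) (1 : k)) ∈
      Submodule.colon (Ideal.span {u (k := k) F p}) (Ideal.span {u (k := k) F i}) := by
    rw [Ideal.mem_colon_span_singleton, Ideal.mem_span_singleton, u, u, monomial_mul_monomial,
      D_add_D _ _ Finset.sdiff_disjoint, Finset.sdiff_union_self_eq_union,
      monomial_dvd_monomial_one]
    exact D_le_D_iff.2 (Finset.subset_union_left)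
  rw [hcolon, Ideal.mem_span_singleton, X, monomial_dvd_monomial_one, single_le_D_iff] at hmem
  have hXl : (X l : MvPolynomial (Fin n) k) ∈
      Submodule.colon (Ideal.span {u (k := k) F p}) (Ideal.span {u (k := k) F i}) := by
    rw [hcolon]
    exact Ideal.subset_span rfl
  rw [Ideal.mem_colon_span_singleton, Ideal.mem_span_singleton, X, u, u, monomial_mul_monomial,
    monomial_dvd_monomial_one] at hXl
  apply Finset.Subset.antisymm
  · intro x hx
    rcases Finset.mem_sdiff.1 hx with ⟨hxp, hxi⟩
    have := hXl x
    rw [Finsupp.add_apply, D_apply, D_apply, Finsupp.single_apply, if_pos hxp, if_neg hxi] at this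
    rw [Finset.mem_singleton]
    by_contra hxl
    rw [if_neg (Ne.symm hxl)] at this
    omega
  · intro x hx
    rw [Finset.mem_singleton] at hx
    subst hx
    exact hmem

include hinj hcard in
theorem lc_of_varDecomp_aux {G : Finset (MvPolynomial (Fin n) k)} (hG : VarDecomp G) :
    ∀ s : Finset (Fin m), G = s.image (u F) → ∀ i ∈ s, ∀ j ∈ s,
      ∃ w : (syzGraph F d).Walk i j, ∀ t ∈ w.support, F t ⊆ F i ∪ F j := by
  induction hG with
  | principal u0 =>
    intro s hs i hi j hj
    have hui : u (k := k) F i = u0 := by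
      have : u (k := k) F i ∈ s.image (u F) := Finset.mem_image_of_mem _ hi
      rw [← hs, Finset.mem_singleton] at this
      exact this
    have huj : u (k := k) F j = u0 := by
      have : u (k := k) F j ∈ s.image (u F) := Finset.mem_image_of_mem _ hj
      rw [← hs, Finset.mem_singleton] at this
      exact this
    have : i = j := u_inj F hinj (hui.trans huj.symm)
    subst this
    exact ⟨SimpleGraph.Walk.nil, fun t ht => by
      rw [SimpleGraph.Walk.support_nil, List.mem_singleton] at ht
      subst ht
      exact Finset.subset_union_left⟩
  | shed G l hne hshed h1 h2 ih1 ih2 =>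
    intro s hs i hi j hj
    subst hs
    have hchar : ∀ a : Fin m, (¬ (X l : MvPolynomial (Fin n) k) ∣ u F a) ↔ l ∉ F a :=
      fun a => not_congr (X_dvd_u_iff F)
    have hs0 : (s.image (u (k := k) F)).filter (fun v => ¬ (X l : MvPolynomial (Fin n) k) ∣ v)
        = (s.filter (fun a => l ∉ F a)).image (u F) := by
      ext v
      constructor
      · intro hv
        rcases Finset.mem_filter.1 hv with ⟨hvi, hnd⟩
        rcases Finset.mem_image.1 hvi with ⟨a, ha, rfl⟩
        exact Finset.mem_image.2 ⟨a, Finset.mem_filter.2 ⟨ha, (hchar a).1 hnd⟩, rfl⟩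
      · intro hv
        rcases Finset.mem_image.1 hv with ⟨a, ha, rfl⟩
        rcases Finset.mem_filter.1 ha with ⟨has, hla⟩
        exact Finset.mem_filter.2 ⟨Finset.mem_image.2 ⟨a, has, rfl⟩, (hchar a).2 hla⟩
    have hs1 : (s.image (u (k := k) F)).filter (fun v => (X l : MvPolynomial (Fin n) k) ∣ v)
        = (s.filter (fun a => l ∈ F a)).image (u F) := by
      ext v
      constructor
      · intro hv
        rcases Finset.mem_filter.1 hv with ⟨hvi, hnd⟩
        rcases Finset.mem_image.1 hvi with ⟨a, ha, rfl⟩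
        exact Finset.mem_image.2 ⟨a, Finset.mem_filter.2 ⟨ha, (X_dvd_u_iff F).1 hnd⟩, rfl⟩
      · intro hv
        rcases Finset.mem_image.1 hv with ⟨a, ha, rfl⟩
        rcases Finset.mem_filter.1 ha with ⟨has, hla⟩
        exact Finset.mem_filter.2 ⟨Finset.mem_image.2 ⟨a, has, rfl⟩, (X_dvd_u_iff F).2 hla⟩
    -- the main mixed-case construction
    have mixed : ∀ i' j' : Fin m, i' ∈ s → j' ∈ s → l ∉ F i' → l ∈ F j' →
        ∃ w : (syzGraph F d).Walk i' j', ∀ t ∈ w.support, F t ⊆ F i' ∪ F j' := by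
      intro i' j' hi' hj' hli' hlj'
      have hmem : u (k := k) F i' ∈
          (s.image (u (k := k) F)).filter (fun v => ¬ (X l : MvPolynomial (Fin n) k) ∣ v) := by
        rw [hs0]
        exact Finset.mem_image_of_mem _ (Finset.mem_filter.2 ⟨hi', hli'⟩)
      obtain ⟨v, hv, hcolon⟩ := hshed _ hmem
      rw [hs1] at hv
      obtain ⟨p, hp, rfl⟩ := Finset.mem_image.1 hv
      rcases Finset.mem_filter.1 hp with ⟨hps, hlp⟩
      have hFnep : F i' ≠ F p := by
        intro e
        rw [e] at hli'
        exact hli' hlp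
      have hdiff : F p \ F i' = {l} := diff_eq_of_colon hFnep hcolon
      have hsubp : F p ⊆ F i' ∪ {l} := by
        intro x hx
        by_cases hxi : x ∈ F i'
        · exact Finset.mem_union.2 (Or.inl hxi)
        · have : x ∈ F p \ F i' := Finset.mem_sdiff.2 ⟨hx, hxi⟩
          rw [hdiff] at this
          exact Finset.mem_union.2 (Or.inr this)
      have hadj : (syzGraph F d).Adj i' p := by
        refine ⟨fun e => hFnep (congrArg F e), ?_⟩
        exact inter_card_of_subset hcard hFnep hsubp hli'
      obtain ⟨w2, hw2⟩ := ih2 (s.filter (fun a => l ∈ F a)) hs1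
        p (Finset.mem_filter.2 ⟨hps, hlp⟩) j' (Finset.mem_filter.2 ⟨hj', hlj'⟩)
      refine ⟨SimpleGraph.Walk.cons hadj w2, ?_⟩
      intro t ht
      rw [SimpleGraph.Walk.support_cons, List.mem_cons] at ht
      rcases ht with ht | ht
      · subst ht
        exact Finset.subset_union_left
      · refine (hw2 t ht).trans ?_
        intro x hx
        rcases Finset.mem_union.1 hx with h' | h'
        · rcases Finset.mem_union.1 (hsubp h') with h'' | h''
          · exact Finset.mem_union.2 (Or.inl h'')
          · rw [Finset.mem_singleton] at h''
            subst h''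
            exact Finset.mem_union.2 (Or.inr hlj')
        · exact Finset.mem_union.2 (Or.inr h')
    by_cases hli : l ∈ F i <;> by_cases hlj : l ∈ F j
    · exact ih2 (s.filter (fun a => l ∈ F a)) hs1
        i (Finset.mem_filter.2 ⟨hi, hli⟩) j (Finset.mem_filter.2 ⟨hj, hlj⟩)
    · obtain ⟨w, hw⟩ := mixed j i hj hi hlj hli
      exact ⟨w.reverse, fun t ht => by
        rw [SimpleGraph.Walk.support_reverse, List.mem_reverse] at ht
        exact (hw t ht).trans (by rw [Finset.union_comm])⟩
    · exact mixed i j hi hj hli hlj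
    · exact ih1 (s.filter (fun a => l ∉ F a)) hs0
        i (Finset.mem_filter.2 ⟨hi, hli⟩) j (Finset.mem_filter.2 ⟨hj, hlj⟩)

include hinj hcard in
theorem lc_of_varDecomp
    (hG : VarDecomp (Finset.image (fun i : Fin m => ∏ l ∈ F i, (X l : MvPolynomial (Fin n) k))
      Finset.univ)) : LC F d := by
  have hu : (fun i : Fin m => ∏ l ∈ F i, (X l : MvPolynomial (Fin n) k)) = u F :=
    funext fun i => u_eq_prod F i
  rw [hu] at hG
  intro i j
  exact lc_of_varDecomp_aux hinj hcard hG Finset.univ rfl i (Finset.mem_univ i)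
    j (Finset.mem_univ j)

end ColonLemmas

section LinRel

variable (hinj : Function.Injective F) (hcard : ∀ i, (F i).card = d)

theorem D_union_sub (A B : Finset (Fin n)) : D (A ∪ B) - D A = D (B \ A) := by
  ext x
  rw [Finsupp.tsub_apply]
  rw [D_apply, D_apply, D_apply]
  by_cases h1 : x ∈ A <;> by_cases h2 : x ∈ B <;>
    simp [h1, h2, Finset.mem_union, Finset.mem_sdiff]

theorem le_sub_iff' {x y a : Fin n →₀ ℕ} (h : x ≤ a) : y ≤ a - x ↔ x + y ≤ a := by
  constructor
  · intro hy
    intro l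
    have h1 := h l
    have h2 := hy l
    rw [Finsupp.tsub_apply] at h2
    rw [Finsupp.add_apply]
    omega
  · intro hy l
    have h1 := hy l
    rw [Finsupp.add_apply] at h1
    rw [Finsupp.tsub_apply]
    omega

theorem exp_cancel {x y a : Fin n →₀ ℕ} (h : x + y ≤ a) : (a - (x + y)) + y = a - x := by
  ext l
  have := h l
  rw [Finsupp.add_apply] at this
  rw [Finsupp.add_apply, Finsupp.tsub_apply, Finsupp.tsub_apply, Finsupp.add_apply]
  omega

/-- the Taylor-type syzygy between two generators -/
noncomputable def sigmaSyz (F : Fin m → Finset (Fin n)) (i j : Fin m) :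
    Fin m → MvPolynomial (Fin n) k :=
  Pi.single i (monomial (D (F j \ F i)) 1) - Pi.single j (monomial (D (F i \ F j)) 1)

theorem phi_apply (w : Fin m → MvPolynomial (Fin n) k) :
    phi (u (k := k) F) w = ∑ i, w i * u F i := rfl

theorem phi_single (p : Fin m) (g : MvPolynomial (Fin n) k) :
    phi (u (k := k) F) (Pi.single p g) = g * u F p := by
  rw [phi_apply]
  rw [Finset.sum_eq_single p]
  · rw [Pi.single_eq_same]
  · intro b _ hbp
    rw [Pi.single_eq_of_ne hbp, zero_mul]
  · intro h
    exact absurd (Finset.mem_univ p) h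

theorem smul_single (f g : MvPolynomial (Fin n) k) (p : Fin m) :
    f • (Pi.single p g : Fin m → MvPolynomial (Fin n) k) = Pi.single p (f * g) := by
  funext t
  by_cases h : t = p
  · subst h
    rw [Pi.smul_apply, Pi.single_eq_same, Pi.single_eq_same, smul_eq_mul]
  · rw [Pi.smul_apply, Pi.single_eq_of_ne h, Pi.single_eq_of_ne h, smul_eq_mul, mul_zero]

theorem phi_sigmaSyz (i j : Fin m) : phi (u (k := k) F) (sigmaSyz F i j) = 0 := by
  rw [sigmaSyz, map_sub, phi_single, phi_single, u, u, monomial_mul_monomial,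
    monomial_mul_monomial, D_add_D _ _ Finset.sdiff_disjoint, D_add_D _ _ Finset.sdiff_disjoint,
    Finset.sdiff_union_self_eq_union, Finset.sdiff_union_self_eq_union, Finset.union_comm,
    sub_self]

/-- structure of a linear syzygy between distinct generators -/
theorem linSyz_structure (hinj : Function.Injective F) {p q : Fin m} {α β : Fin n}
    (hpq : p ≠ q) (heq : (X α : MvPolynomial (Fin n) k) * u F p = X β * u F q) :
    α ∉ F p ∧ β ∉ F q ∧ F q \ F p = {α} ∧ F p \ F q = {β} ∧
      Finsupp.single α 1 + D (F p) = Finsupp.single β 1 + D (F q) := by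
  have hFpq : F p ≠ F q := fun e => hpq (hinj e)
  rw [X, X, u, u, monomial_mul_monomial, monomial_mul_monomial, monomial_eq_monomial_iff] at heq
  rcases heq with ⟨hexp, -⟩ | ⟨h1, -⟩
  swap
  · exact absurd h1 one_ne_zero
  have hab : α ≠ β := by
    intro e
    subst e
    exact hFpq (D_inj (add_left_cancel hexp))
  have happ : ∀ x, Finsupp.single α 1 x + D (F p) x = Finsupp.single β 1 x + D (F q) x := by
    intro x
    rw [← Finsupp.add_apply, ← Finsupp.add_apply, hexp]
  have key : ∀ x, (if α = x then 1 else 0) + (if x ∈ F p then 1 else 0)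
      = ((if β = x then 1 else 0) + (if x ∈ F q then 1 else 0) : ℕ) := by
    intro x
    have h := happ x
    rwa [Finsupp.single_apply, Finsupp.single_apply, D_apply, D_apply] at h
  have hap : α ∉ F p := by
    intro hmem
    have h := key α
    rw [if_pos rfl, if_pos hmem, if_neg (fun e : β = α => hab e.symm)] at h
    split_ifs at h <;> omega
  have hbq : β ∉ F q := by
    intro hmem
    have h := key β
    rw [if_neg hab, if_pos rfl, if_pos hmem] at h
    split_ifs at h <;> omega
  have haq : α ∈ F q := by
    have h := key α
    rw [if_pos rfl, if_neg hap, if_neg (fun e : β = α => hab e.symm)] at h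
    split_ifs at h with h'
    · exact h'
    · omega
  have hbp : β ∈ F p := by
    have h := key β
    rw [if_neg hab, if_pos rfl, if_neg hbq] at h
    split_ifs at h with h'
    · exact h'
    · omega
  have hd1 : F q \ F p = {α} := by
    apply Finset.Subset.antisymm
    · intro x hx
      rcases Finset.mem_sdiff.1 hx with ⟨hxq, hxp⟩
      rw [Finset.mem_singleton]
      by_contra hxa
      have h := key x
      rw [if_neg (fun e : α = x => hxa e.symm), if_neg hxp, if_pos hxq] at h
      split_ifs at h with h'
      · exact hbq (by rw [h']; exact hxq)
      · omega
    · intro x hx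
      rw [Finset.mem_singleton] at hx
      subst hx
      exact Finset.mem_sdiff.2 ⟨haq, hap⟩
  have hd2 : F p \ F q = {β} := by
    apply Finset.Subset.antisymm
    · intro x hx
      rcases Finset.mem_sdiff.1 hx with ⟨hxp, hxq⟩
      rw [Finset.mem_singleton]
      by_contra hxb
      have h := key x
      rw [if_neg (fun e : α = x => hap (by rw [e]; exact hxp)), if_pos hxp,
        if_neg (fun e : β = x => hxb e.symm), if_neg hxq] at h
      omega
    · intro x hx
      rw [Finset.mem_singleton] at hx
      subst hx
      exact Finset.mem_sdiff.2 ⟨hbp, hbq⟩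
  exact ⟨hap, hbq, hd1, hd2, hexp⟩

theorem exp_add_sub (e x : Fin n →₀ ℕ) : e + x - x = e := by
  ext l
  rw [Finsupp.tsub_apply, Finsupp.add_apply]
  omega

theorem le_add_left'' (e x : Fin n →₀ ℕ) : x ≤ e + x := by
  intro l
  rw [Finsupp.add_apply]
  omega

theorem D_union_le {S T : Finset (Fin n)} {a : Fin n →₀ ℕ} (h1 : D S ≤ a) (h2 : D T ≤ a) :
    D (S ∪ T) ≤ a := by
  intro l
  have g1 := h1 l
  have g2 := h2 l
  rw [D_apply] at g1 g2 ⊢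
  by_cases hS : l ∈ S
  · rw [if_pos hS] at g1
    simp only [Finset.mem_union]
    rw [if_pos (Or.inl hS)]
    omega
  · by_cases hT : l ∈ T
    · rw [if_pos hT] at g2
      simp only [Finset.mem_union]
      rw [if_pos (Or.inr hT)]
      omega
    · simp only [Finset.mem_union]
      rw [if_neg (by tauto)]
      omega

/-- Taylor syzygy in ambient multidegree `a` -/
noncomputable def tauA (F : Fin m → Finset (Fin n)) (a : Fin n →₀ ℕ) (p q : Fin m) :
    Fin m → MvPolynomial (Fin n) k :=
  Pi.single p (monomial (a - D (F p)) 1) - Pi.single q (monomial (a - D (F q)) 1)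

theorem D_union_eq_add_diff (S T : Finset (Fin n)) : D (S ∪ T) = D S + D (T \ S) := by
  rw [D_add_D _ _ Finset.disjoint_sdiff, Finset.union_sdiff_self_eq_union]

theorem tau_step {p q : Fin m} {a : Fin n →₀ ℕ}
    (hpa : D (F p) ≤ a) (hqa : D (F q) ≤ a) :
    tauA (k := k) F a p q
      = monomial (a - D (F p ∪ F q)) (1 : k) • sigmaSyz F p q := by
  have hLa : D (F p ∪ F q) ≤ a := D_union_le hpa hqa
  rw [sigmaSyz, tauA, smul_sub, smul_single, smul_single, monomial_mul_monomial,
    monomial_mul_monomial]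
  have e1 : a - D (F p ∪ F q) + D (F q \ F p) = a - D (F p) := by
    have h1 : D (F p) + D (F q \ F p) = D (F p ∪ F q) := (D_union_eq_add_diff _ _).symm
    rw [← h1] at hLa ⊢
    exact exp_cancel hLa
  have e2 : a - D (F p ∪ F q) + D (F p \ F q) = a - D (F q) := by
    have h1 : D (F q) + D (F p \ F q) = D (F p ∪ F q) := by
      rw [Finset.union_comm]
      exact (D_union_eq_add_diff _ _).symm
    rw [← h1] at hLa ⊢
    exact exp_cancel hLa
  rw [e1, e2]

theorem sigmaSyz_mem_linSyz (hinj : Function.Injective F) (hcard : ∀ i, (F i).card = d)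
    {p q : Fin m} (hadj : (syzGraph F d).Adj p q) :
    sigmaSyz (k := k) F p q ∈ linSyz (u (k := k) F) := by
  obtain ⟨α, hα⟩ := adj_sdiff hcard hadj
  obtain ⟨β, hβ⟩ := adj_sdiff hcard hadj.symm
  refine ⟨p, q, α, β, ?_, ?_⟩
  · rw [X, X, u, u, monomial_mul_monomial, monomial_mul_monomial]
    congr 1
    rw [add_comm, add_comm (Finsupp.single β 1), ← D_singleton, ← D_singleton,
      ← hα, ← hβ, ← D_union_eq_add_diff, ← D_union_eq_add_diff, Finset.union_comm]
  · rw [sigmaSyz, hα, hβ, D_singleton, D_singleton, ← X, ← X]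

theorem tau_telescope {iU jU : Fin m} :
    ∀ {p q : Fin m} (w : (syzGraph F d).Walk p q),
      (∀ t ∈ w.support, F t ⊆ F iU ∪ F jU) →
      (hinj : Function.Injective F) → (hcard : ∀ i, (F i).card = d) →
      tauA (k := k) F (D (F iU ∪ F jU)) p q
        ∈ Submodule.span (MvPolynomial (Fin n) k) (linSyz (u (k := k) F)) := by
  intro p q w
  induction w with
  | nil =>
    intro _ _ _
    rw [tauA, sub_self]
    exact Submodule.zero_mem _
  | cons hadj w' ih =>
    rename_i p' v' q'
    intro hsupp hinj hcard
    have hp'supp : F p' ⊆ F iU ∪ F jU := hsupp p' (SimpleGraph.Walk.start_mem_support _)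
    have hv'supp : F v' ⊆ F iU ∪ F jU := by
      apply hsupp
      rw [SimpleGraph.Walk.support_cons]
      exact List.mem_cons_of_mem _ (SimpleGraph.Walk.start_mem_support _)
    have hsplit : tauA (k := k) F (D (F iU ∪ F jU)) p' q'
        = tauA (k := k) F (D (F iU ∪ F jU)) p' v' + tauA (k := k) F (D (F iU ∪ F jU)) v' q' := by
      rw [tauA, tauA, tauA, sub_add_sub_cancel]
    rw [hsplit]
    refine Submodule.add_mem _ ?_ ?_
    · rw [tau_step (D_le_D_iff.2 hp'supp) (D_le_D_iff.2 hv'supp)]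
      exact Submodule.smul_mem _ _ (Submodule.subset_span (sigmaSyz_mem_linSyz hinj hcard hadj))
    · apply ih ?_ hinj hcard
      intro t ht
      apply hsupp
      rw [SimpleGraph.Walk.support_cons]
      exact List.mem_cons_of_mem _ ht

theorem sigma_eq_tau (i j : Fin m) :
    sigmaSyz (k := k) F i j = tauA (k := k) F (D (F i ∪ F j)) i j := by
  rw [sigmaSyz, tauA, D_union_sub]
  have : D (F i ∪ F j) - D (F j) = D (F i \ F j) := by
    rw [Finset.union_comm]
    exact D_union_sub _ _
  rw [this]

theorem span_sigma_le_ker :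
    Submodule.span (MvPolynomial (Fin n) k)
        {w : Fin m → MvPolynomial (Fin n) k | ∃ i j : Fin m, w = sigmaSyz (k := k) F i j}
      ≤ LinearMap.ker (phi (u (k := k) F)) := by
  rw [Submodule.span_le]
  rintro w ⟨i, j, rfl⟩
  exact LinearMap.mem_ker.2 (phi_sigmaSyz i j)

theorem ker_le_span_sigma :
    LinearMap.ker (phi (u (k := k) F)) ≤ Submodule.span (MvPolynomial (Fin n) k)
      {w : Fin m → MvPolynomial (Fin n) k | ∃ i j : Fin m, w = sigmaSyz (k := k) F i j} := by
  suffices H : ∀ N : ℕ, ∀ c : Fin m → MvPolynomial (Fin n) k, phi (u (k := k) F) c = 0 →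
      (∑ i, (c i).support.card) < N →
      c ∈ Submodule.span (MvPolynomial (Fin n) k)
        {w : Fin m → MvPolynomial (Fin n) k | ∃ i j : Fin m, w = sigmaSyz (k := k) F i j} by
    intro c hc
    rw [LinearMap.mem_ker] at hc
    exact H (∑ i, (c i).support.card).succ c hc (Nat.lt_succ_self _)
  intro N
  induction N with
  | zero => intro c _ h; exact absurd h (Nat.not_lt_zero _)
  | succ N ih =>
    intro c hc hlt
    by_cases hc0 : c = 0
    · rw [hc0]; exact Submodule.zero_mem _
    have hex : ∃ i0 : Fin m, c i0 ≠ 0 := by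
      by_contra hall
      push_neg at hall
      exact hc0 (funext hall)
    obtain ⟨i0, hi0⟩ := hex
    have hsupp0 : (c i0).support.Nonempty := by
      rw [Finset.nonempty_iff_ne_empty]
      intro he
      exact hi0 (support_eq_empty.1 he)
    obtain ⟨e0, he0⟩ := hsupp0
    set a := e0 + D (F i0) with ha
    have hpt0 : a - D (F i0) = e0 := by rw [ha]; exact exp_add_sub _ _
    set lam : Fin m → k := fun i => coeff (a - D (F i)) (c i) with hlam
    set A := Finset.univ.filter (fun i : Fin m => D (F i) ≤ a ∧ lam i ≠ 0) with hA
    have hi0A : i0 ∈ A := by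
      refine Finset.mem_filter.2 ⟨Finset.mem_univ _, le_add_left'' _ _, ?_⟩
      show coeff (a - D (F i0)) (c i0) ≠ 0
      rw [hpt0]
      exact mem_support_iff.1 he0
    have hsum0 : ∑ i ∈ A, lam i = 0 := by
      have h1 : coeff a (phi (u (k := k) F) c) = 0 := by rw [hc, coeff_zero]
      rw [phi_apply, coeff_sum] at h1
      have h2 : ∀ i : Fin m, coeff a (c i * u F i)
          = if D (F i) ≤ a then lam i else 0 := by
        intro i
        rw [u, coeff_mul_monomial']
        split_ifs with h
        · rw [mul_one]
        · rfl
      rw [Finset.sum_congr rfl (fun i _ => h2 i), Finset.sum_ite, Finset.sum_const_zero,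
        add_zero] at h1
      rw [← h1]
      apply Finset.sum_subset
      · intro x hx
        rcases Finset.mem_filter.1 hx with ⟨hx1, hx2, -⟩
        exact Finset.mem_filter.2 ⟨hx1, hx2⟩
      · intro x hx hnx
        by_contra hlx
        rcases Finset.mem_filter.1 hx with ⟨hx1, hx2⟩
        exact hnx (Finset.mem_filter.2 ⟨hx1, hx2, hlx⟩)
    set w : Fin m → MvPolynomial (Fin n) k
      := ∑ i ∈ A, Pi.single i (monomial (a - D (F i)) (lam i)) with hw
    have hwapp : ∀ t, w t = if t ∈ A then monomial (a - D (F t)) (lam t) else 0 := by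
      intro t
      rw [hw, Finset.sum_apply]
      by_cases ht : t ∈ A
      · rw [if_pos ht]
        have h0 : ∀ b ∈ A, b ≠ t →
            (Pi.single b (monomial (a - D (F b)) (lam b)) : Fin m → MvPolynomial (Fin n) k) t
              = 0 :=
          fun b _ hbt => Pi.single_eq_of_ne (Ne.symm hbt) _
        rw [Finset.sum_eq_single_of_mem t ht h0, Pi.single_eq_same]
      · rw [if_neg ht]
        apply Finset.sum_eq_zero
        intro b hb
        have hbt : t ≠ b := fun e => ht (e ▸ hb)
        exact Pi.single_eq_of_ne hbt _
    have claim1 : ∀ i ∈ A, (Pi.single i (monomial (a - D (F i)) (1 : k)) : Fin m → _)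
        - Pi.single i0 (monomial (a - D (F i0)) (1 : k))
        = monomial (a - D (F i ∪ F i0)) (1 : k) • sigmaSyz F i i0 := by
      intro i hiA
      rcases Finset.mem_filter.1 hiA with ⟨-, hia, -⟩
      rcases Finset.mem_filter.1 hi0A with ⟨-, hi0a, -⟩
      have := tau_step (k := k) (F := F) hia hi0a
      rwa [tauA] at this
    have hwsum : w = ∑ i ∈ A,
        (C (lam i) * monomial (a - D (F i ∪ F i0)) (1 : k)) • sigmaSyz F i i0 := by
      have hstep : ∀ i ∈ A, (C (lam i) * monomial (a - D (F i ∪ F i0)) (1 : k)) • sigmaSyz F i i0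
          = (Pi.single i (monomial (a - D (F i)) (lam i)) : Fin m → MvPolynomial (Fin n) k)
            - Pi.single i0 (monomial (a - D (F i0)) (lam i)) := by
        intro i hiA
        rw [mul_smul, ← claim1 i hiA, smul_sub, smul_single, smul_single,
          C_mul_monomial, C_mul_monomial, mul_one]
      rw [Finset.sum_congr rfl hstep, Finset.sum_sub_distrib]
      have hsum2 : (∑ i ∈ A,
          (Pi.single i0 (monomial (a - D (F i0)) (lam i)) : Fin m → MvPolynomial (Fin n) k))
          = 0 := by
        have hrw : ∀ i ∈ A,
            (Pi.single i0 (monomial (a - D (F i0)) (lam i)) : Fin m → MvPolynomial (Fin n) k)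
            = (C (lam i) : MvPolynomial (Fin n) k) •
              (Pi.single i0 (monomial (a - D (F i0)) (1 : k)) : Fin m → MvPolynomial (Fin n) k)
              := by
          intro i _
          rw [smul_single, C_mul_monomial, mul_one]
        rw [Finset.sum_congr rfl hrw, ← Finset.sum_smul]
        have hzero : (∑ i ∈ A, C (lam i) : MvPolynomial (Fin n) k) = 0 := by
          rw [← map_sum, hsum0, map_zero]
        rw [hzero, zero_smul]
      rw [hsum2, sub_zero, hw]
    have hwspan : w ∈ Submodule.span (MvPolynomial (Fin n) k)
        {w : Fin m → MvPolynomial (Fin n) k | ∃ i j : Fin m, w = sigmaSyz (k := k) F i j} := by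
      rw [hwsum]
      exact Submodule.sum_mem _ fun i _ =>
        Submodule.smul_mem _ _ (Submodule.subset_span ⟨i, i0, rfl⟩)
    have hwker : phi (u (k := k) F) w = 0 := LinearMap.mem_ker.1 (span_sigma_le_ker hwspan)
    set c' : Fin m → MvPolynomial (Fin n) k := c - w with hc'def
    have hc' : phi (u (k := k) F) c' = 0 := by
      rw [hc'def, map_sub, hc, hwker, sub_zero]
    have hkey : ∀ i, c' i = c i - (if i ∈ A then monomial (a - D (F i)) (lam i) else 0) := by
      intro i
      rw [hc'def, Pi.sub_apply, hwapp i]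
    have hsub : ∀ i, (c' i).support ⊆ (c i).support := by
      intro i e he
      rw [mem_support_iff] at he ⊢
      intro h0
      apply he
      rw [hkey i, coeff_sub, h0, zero_sub, neg_eq_zero]
      split_ifs with hiA
      · rw [coeff_monomial]
        split_ifs with he2
        · show coeff (a - D (F i)) (c i) = 0
          rw [he2]
          exact h0
        · rfl
      · rw [coeff_zero]
    have herase : ∀ i ∈ A, (c' i).support = (c i).support.erase (a - D (F i)) := by
      intro i hiA
      ext e
      rw [Finset.mem_erase, mem_support_iff, mem_support_iff, hkey i, if_pos hiA, coeff_sub,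
        coeff_monomial]
      by_cases he : a - D (F i) = e
      · rw [if_pos he, ← he]
        have hl : lam i = coeff (a - D (F i)) (c i) := rfl
        rw [← hl, sub_self]
        simp
      · rw [if_neg he, sub_zero]
        constructor
        · intro h2
          exact ⟨fun e2 => he e2.symm, h2⟩
        · exact fun h2 => h2.2
    have hltnu : ∑ i, (c' i).support.card < ∑ i, (c i).support.card := by
      apply Finset.sum_lt_sum
      · intro i _
        exact Finset.card_le_card (hsub i)
      · refine ⟨i0, Finset.mem_univ _, ?_⟩
        rw [herase i0 hi0A]
        have hmem : a - D (F i0) ∈ (c i0).support := by rw [hpt0]; exact he0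
        rw [Finset.card_erase_of_mem hmem]
        have hpos : 0 < (c i0).support.card := Finset.card_pos.2 ⟨_, hmem⟩
        omega
    have hmem' := ih c' hc' (by omega)
    have hfinal : c = c' + w := by rw [hc'def, sub_add_cancel]
    rw [hfinal]
    exact Submodule.add_mem _ hmem' hwspan

theorem sub_sub' (a b c : Fin n →₀ ℕ) : a - b - c = a - (b + c) := by
  ext l
  rw [Finsupp.tsub_apply, Finsupp.tsub_apply, Finsupp.tsub_apply, Finsupp.add_apply]
  omega

theorem sdiff_singleton_subset {S T : Finset (Fin n)} {α : Fin n} (h : T \ S = {α}) :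
    T ⊆ S ∪ {α} := by
  intro x hx
  by_cases hxs : x ∈ S
  · exact Finset.mem_union.2 (Or.inl hxs)
  · have : x ∈ T \ S := Finset.mem_sdiff.2 ⟨hx, hxs⟩
    rw [h] at this
    exact Finset.mem_union.2 (Or.inr this)

include hinj hcard in
theorem hasLinRel_of_lc (hlc : LC F d) : HasLinRel (u (k := k) F) := by
  apply le_antisymm
  · rw [Submodule.span_le]
    rintro w ⟨i, j, α, β, heq, rfl⟩
    rw [SetLike.mem_coe, LinearMap.mem_ker, map_sub, phi_single, phi_single, heq, sub_self]
  · refine le_trans ker_le_span_sigma ?_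
    rw [Submodule.span_le]
    rintro w ⟨i, j, rfl⟩
    rw [SetLike.mem_coe, sigma_eq_tau]
    obtain ⟨wk, hwk⟩ := hlc i j
    exact tau_telescope wk hwk hinj hcard

include hinj hcard in
theorem lc_of_hasLinRel (h : HasLinRel (u (k := k) F)) : LC F d := by
  intro i j
  by_cases hij : i = j
  · subst hij
    exact ⟨SimpleGraph.Walk.nil, fun t ht => by
      rw [SimpleGraph.Walk.support_nil, List.mem_singleton] at ht
      subst ht; exact Finset.subset_union_left⟩
  set a := D (F i ∪ F j) with ha
  set K : Set (Fin m) := {t | ∃ w : (syzGraph F d).Walk i t, ∀ r ∈ w.support, F r ⊆ F i ∪ F j}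
    with hK
  by_cases hjK : j ∈ K
  · obtain ⟨w, hw⟩ := hjK
    exact ⟨w, hw⟩
  exfalso
  have hiK : i ∈ K := ⟨SimpleGraph.Walk.nil, fun r hr => by
    rw [SimpleGraph.Walk.support_nil, List.mem_singleton] at hr
    subst hr; exact Finset.subset_union_left⟩
  have hKsub : ∀ t ∈ K, F t ⊆ F i ∪ F j := by
    rintro t ⟨w, hw⟩
    exact hw t (SimpleGraph.Walk.end_mem_support w)
  have hKa : ∀ t ∈ K, D (F t) ≤ a := fun t ht => D_le_D_iff.2 (hKsub t ht)
  have hKclosed : ∀ t ∈ K, ∀ t', (syzGraph F d).Adj t t' → F t' ⊆ F i ∪ F j → t' ∈ K := by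
    rintro t ⟨w, hw⟩ t' hadj hsub
    refine ⟨w.concat hadj, ?_⟩
    intro r hr
    rw [SimpleGraph.Walk.support_concat, List.mem_append] at hr
    rcases hr with hr | hr
    · exact hw r hr
    · rw [List.mem_singleton] at hr; subst hr; exact hsub
  set KF := Finset.univ.filter (fun t : Fin m => t ∈ K) with hKF
  set Phi : (Fin m → MvPolynomial (Fin n) k) → k
    := fun c => ∑ t ∈ KF, coeff (a - D (F t)) (c t) with hPhi
  have Phi_sub : ∀ c1 c2, Phi (c1 - c2) = Phi c1 - Phi c2 := by
    intro c1 c2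
    show (∑ t ∈ KF, coeff (a - D (F t)) ((c1 - c2) t))
      = (∑ t ∈ KF, coeff (a - D (F t)) (c1 t)) - ∑ t ∈ KF, coeff (a - D (F t)) (c2 t)
    simp only [Pi.sub_apply, coeff_sub]
    rw [Finset.sum_sub_distrib]
  have Phi_add : ∀ c1 c2, Phi (c1 + c2) = Phi c1 + Phi c2 := by
    intro c1 c2
    show (∑ t ∈ KF, coeff (a - D (F t)) ((c1 + c2) t))
      = (∑ t ∈ KF, coeff (a - D (F t)) (c1 t)) + ∑ t ∈ KF, coeff (a - D (F t)) (c2 t)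
    simp only [Pi.add_apply, coeff_add]
    rw [Finset.sum_add_distrib]
  have Phi_single : ∀ (p : Fin m) (g : MvPolynomial (Fin n) k),
      Phi (Pi.single p g) = if p ∈ K then coeff (a - D (F p)) g else 0 := by
    intro p g
    show (∑ t ∈ KF, coeff (a - D (F t)) ((Pi.single p g : Fin m → MvPolynomial (Fin n) k) t))
      = _
    by_cases hp : p ∈ K
    · rw [if_pos hp]
      have h0 : ∀ b ∈ KF, b ≠ p →
          coeff (a - D (F b)) ((Pi.single p g : Fin m → MvPolynomial (Fin n) k) b) = 0 := by
        intro b _ hbp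
        rw [Pi.single_eq_of_ne hbp, coeff_zero]
      rw [Finset.sum_eq_single_of_mem p (Finset.mem_filter.2 ⟨Finset.mem_univ _, hp⟩) h0,
        Pi.single_eq_same]
    · rw [if_neg hp]
      apply Finset.sum_eq_zero
      intro b hb
      have hbp : b ≠ p := fun e => hp (e ▸ (Finset.mem_filter.1 hb).2)
      rw [Pi.single_eq_of_ne hbp, coeff_zero]
  have Phi_zero : Phi 0 = 0 := by
    show (∑ t ∈ KF, coeff (a - D (F t)) ((0 : Fin m → MvPolynomial (Fin n) k) t)) = 0
    simp
  have hkill : ∀ c ∈ Submodule.span (MvPolynomial (Fin n) k) (linSyz (u (k := k) F)),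
      ∀ f : MvPolynomial (Fin n) k, Phi (f • c) = 0 := by
    intro c hc
    induction hc using Submodule.span_induction with
    | mem w hw =>
      obtain ⟨p, q, α, β, heq, rfl⟩ := hw
      intro f
      by_cases hpq : p = q
      · subst hpq
        have hab : α = β := by
          have h2 := heq
          rw [X, X, u, monomial_mul_monomial, monomial_mul_monomial,
            monomial_eq_monomial_iff] at h2
          rcases h2 with ⟨h1, -⟩ | ⟨h1, -⟩
          · have h3 := add_right_cancel h1
            rcases (Finsupp.single_eq_single_iff _ _ _ _).1 h3 with ⟨h2, -⟩ | ⟨-, h2⟩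
            · exact h2
            · exact absurd h2 one_ne_zero
          · exact absurd h1 one_ne_zero
        subst hab
        rw [sub_self, smul_zero, Phi_zero]
      · obtain ⟨hap, hbq, hd1, hd2, hexp⟩ := linSyz_structure hinj hpq heq
        have hFpq : F p ≠ F q := fun e => hpq (hinj e)
        have hL : D (F p) + Finsupp.single α 1 = D (F q) + Finsupp.single β 1 := by
          rw [add_comm, add_comm (D (F q))]
          exact hexp
        rw [smul_sub, smul_single, smul_single, Phi_sub, Phi_single, Phi_single]
        have hcoefp : p ∈ K → coeff (a - D (F p)) (f * X α)
            = if D (F p) + Finsupp.single α 1 ≤ a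
              then coeff (a - (D (F p) + Finsupp.single α 1)) f else 0 := by
          intro hp
          rw [X, coeff_mul_monomial']
          simp only [le_sub_iff' (hKa p hp)]
          rw [mul_one, sub_sub']
        have hcoefq : q ∈ K → coeff (a - D (F q)) (f * X β)
            = if D (F q) + Finsupp.single β 1 ≤ a
              then coeff (a - (D (F q) + Finsupp.single β 1)) f else 0 := by
          intro hq
          rw [X, coeff_mul_monomial']
          simp only [le_sub_iff' (hKa q hq)]
          rw [mul_one, sub_sub']
        by_cases hp : p ∈ K <;> by_cases hq : q ∈ K
        · rw [if_pos hp, if_pos hq, hcoefp hp, hcoefq hq, hL, sub_self]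
        · rw [if_pos hp, if_neg hq, hcoefp hp, sub_zero]
          have hcond : ¬ (D (F p) + Finsupp.single α 1 ≤ a) := by
            intro hle
            apply hq
            refine hKclosed p hp q ⟨hpq, ?_⟩ ?_
            · exact inter_card_of_subset hcard hFpq (sdiff_singleton_subset hd1) hap
            · apply D_le_D_iff.1
              calc D (F q) ≤ D (F q) + Finsupp.single β 1 := le_self_add
                _ = D (F p) + Finsupp.single α 1 := hL.symm
                _ ≤ a := hle
          rw [if_neg hcond]
        · rw [if_neg hp, if_pos hq, hcoefq hq, zero_sub, neg_eq_zero]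
          have hcond : ¬ (D (F q) + Finsupp.single β 1 ≤ a) := by
            intro hle
            apply hp
            refine hKclosed q hq p ⟨Ne.symm hpq, ?_⟩ ?_
            · exact inter_card_of_subset hcard (Ne.symm hFpq) (sdiff_singleton_subset hd2) hbq
            · apply D_le_D_iff.1
              calc D (F p) ≤ D (F p) + Finsupp.single α 1 := le_self_add
                _ = D (F q) + Finsupp.single β 1 := hL
                _ ≤ a := hle
          rw [if_neg hcond]
        · rw [if_neg hp, if_neg hq, sub_zero]
    | zero =>
      intro f
      rw [smul_zero, Phi_zero]
    | add x y hx hy ihx ihy =>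
      intro f
      rw [smul_add, Phi_add, ihx f, ihy f, add_zero]
    | smul r x hx ihx =>
      intro f
      rw [smul_smul]
      exact ihx (f * r)
  have hσker : sigmaSyz (k := k) F i j ∈ LinearMap.ker (phi (u (k := k) F)) :=
    LinearMap.mem_ker.2 (phi_sigmaSyz i j)
  rw [← h] at hσker
  have h1 := hkill _ hσker 1
  rw [one_smul, sigmaSyz, Phi_sub, Phi_single, Phi_single, if_pos hiK, if_neg hjK,
    sub_zero, ha, D_union_sub, coeff_monomial, if_pos rfl] at h1
  exact one_ne_zero h1

end LinRel

section Graph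

theorem exists_leaf {V : Type*} [Fintype V] {G : SimpleGraph V} [DecidableRel G.Adj]
    (hT : G.IsTree) (h2 : 2 ≤ Fintype.card V) :
    ∃ q p, G.Adj q p ∧ ∀ t, G.Adj q t → t = p := by
  have hdeg : ∃ q : V, G.degree q ≤ 1 := by
    by_contra hall
    push_neg at hall
    have hsum := G.sum_degrees_eq_twice_card_edges
    have hcardE : G.edgeFinset.card + 1 = Fintype.card V := hT.card_edgeFinset
    have hge : 2 * Fintype.card V ≤ ∑ v : V, G.degree v := by
      calc 2 * Fintype.card V = ∑ _v : V, 2 := by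
            rw [Finset.sum_const, Finset.card_univ]; ring
        _ ≤ _ := Finset.sum_le_sum fun i _ => hall i
    omega
  obtain ⟨q, hq⟩ := hdeg
  obtain ⟨t, ht⟩ := Fintype.exists_ne_of_one_lt_card (by omega) q
  obtain ⟨w⟩ := hT.isConnected.preconnected q t
  have hnbr : ∃ p, G.Adj q p := by
    cases w with
    | nil => exact absurd rfl ht
    | cons h _ => exact ⟨_, h⟩
  obtain ⟨p, hp⟩ := hnbr
  have hdeg1 : (G.neighborFinset q).card = 1 := by
    have h1 : 1 ≤ (G.neighborFinset q).card :=
      Finset.card_pos.2 ⟨p, (SimpleGraph.mem_neighborFinset _ _ _).2 hp⟩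
    have h2' : (G.neighborFinset q).card = G.degree q := G.card_neighborFinset_eq_degree q
    omega
  obtain ⟨p0, hp0⟩ := Finset.card_eq_one.1 hdeg1
  refine ⟨q, p0, ?_, ?_⟩
  · have : p0 ∈ G.neighborFinset q := by rw [hp0]; exact Finset.mem_singleton_self _
    exact (SimpleGraph.mem_neighborFinset _ _ _).1 this
  · intro t' hadj
    have : t' ∈ G.neighborFinset q := (SimpleGraph.mem_neighborFinset _ _ _).2 hadj
    rw [hp0, Finset.mem_singleton] at this
    exact this

theorem path_interior_neighbors {V : Type*} {G : SimpleGraph V} {q : V} :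
    ∀ {x y : V} (w : G.Walk x y), w.IsPath → q ∈ w.support → q ≠ x → q ≠ y →
      ∃ s t, s ≠ t ∧ G.Adj q s ∧ G.Adj q t := by
  intro x y w
  induction w with
  | nil =>
    intro _ hq hx _
    rw [SimpleGraph.Walk.support_nil, List.mem_singleton] at hq
    exact absurd hq hx
  | cons h w' ih =>
    rename_i a b c
    intro hpath hq hx hy
    rw [SimpleGraph.Walk.support_cons, List.mem_cons] at hq
    rcases hq with hq | hq
    · exact absurd hq hx
    · by_cases hqb : q = b
      · subst hqb
        cases w' with
        | nil => exact absurd rfl hy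
        | cons h2 w'' =>
          rename_i e
          refine ⟨a, e, ?_, h.symm, h2⟩
          intro hae
          rw [SimpleGraph.Walk.cons_isPath_iff] at hpath
          apply hpath.2
          rw [hae, SimpleGraph.Walk.support_cons]
          exact List.mem_cons_of_mem _ (SimpleGraph.Walk.start_mem_support _)
      · exact ih ((SimpleGraph.Walk.cons_isPath_iff h w').1 hpath).1 hq hqb hy

theorem walk_penult {V : Type*} {G : SimpleGraph V} {t q : V} (w : G.Walk q t)
    (hne : q ≠ t) : ∃ z, G.Adj q z ∧ z ∈ w.support := by
  cases w with
  | nil => exact absurd rfl hne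
  | cons h w1 =>
    refine ⟨_, h, ?_⟩
    rw [SimpleGraph.Walk.support_cons]
    exact List.mem_cons_of_mem _ (SimpleGraph.Walk.start_mem_support _)

theorem walk_avoid_leaf {V : Type*} {G : SimpleGraph V} {q p0 : V}
    (hleaf : ∀ t, G.Adj q t → t = p0) {x y : V} (w : G.Walk x y)
    (hx : x ≠ q) (hy : y ≠ q) :
    ∃ w' : G.Walk x y, (∀ t ∈ w'.support, t ∈ w.support) ∧ ∀ t ∈ w'.support, t ≠ q := by
  refine ⟨w.bypass, fun t ht => SimpleGraph.Walk.support_bypass_subset _ ht, ?_⟩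
  intro t ht htq
  subst htq
  obtain ⟨s, t', hst, h1, h2⟩ := path_interior_neighbors w.bypass
    (SimpleGraph.Walk.bypass_isPath w) ht (Ne.symm hx) (Ne.symm hy)
  exact hst ((hleaf s h1).trans (hleaf t' h2).symm)

theorem lift_walk {m' : ℕ} {F : Fin (m' + 1) → Finset (Fin n)} {d : ℕ} {q : Fin (m' + 1)} :
    ∀ {x y : Fin (m' + 1)} (w : (syzGraph F d).Walk x y), (∀ t ∈ w.support, t ≠ q) →
      ∀ (x' y' : Fin m'), q.succAbove x' = x → q.succAbove y' = y →
      ∃ w' : (syzGraph (F ∘ q.succAbove) d).Walk x' y',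
        ∀ t ∈ w'.support, q.succAbove t ∈ w.support := by
  intro x y w
  induction w with
  | nil =>
    intro _ x' y' hx hy
    have hxy : x' = y' := Fin.succAbove_right_injective (hx.trans hy.symm)
    subst hxy
    refine ⟨SimpleGraph.Walk.nil, ?_⟩
    intro t ht
    rw [SimpleGraph.Walk.support_nil, List.mem_singleton] at ht
    subst ht
    rw [hx]
    exact SimpleGraph.Walk.start_mem_support _
  | cons h w1 ih =>
    rename_i a b c
    intro hq x' y' hx hy
    have hbq : b ≠ q := hq b (by
      rw [SimpleGraph.Walk.support_cons]
      exact List.mem_cons_of_mem _ (SimpleGraph.Walk.start_mem_support _))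
    obtain ⟨b', hb'⟩ := Fin.exists_succAbove_eq hbq
    obtain ⟨w1', hw1'⟩ := ih (fun t htw => hq t (by
      rw [SimpleGraph.Walk.support_cons]
      exact List.mem_cons_of_mem _ htw)) b' y' hb' hy
    have hadj : (syzGraph (F ∘ q.succAbove) d).Adj x' b' := by
      refine ⟨?_, ?_⟩
      · intro e
        apply h.1
        rw [← hx, ← hb', e]
      · show (F (q.succAbove x') ∩ F (q.succAbove b')).card + 1 = d
        rw [hx, hb']
        exact h.2
    refine ⟨SimpleGraph.Walk.cons hadj w1', ?_⟩
    intro t ht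
    rw [SimpleGraph.Walk.support_cons, List.mem_cons] at ht
    rw [SimpleGraph.Walk.support_cons]
    rcases ht with ht | ht
    · subst ht
      rw [hx]
      exact List.mem_cons_self
    · exact List.mem_cons_of_mem _ (hw1' t ht)

/-- CORE: a tree with the linear-connectivity property admits a "leaf elimination"
ordering of its vertices with the shedding property at each stage. -/
theorem core : ∀ (m : ℕ) (F : Fin m → Finset (Fin n)) (d : ℕ), Function.Injective F →
    (∀ i, (F i).card = d) → (syzGraph F d).IsTree → LC F d →
    ∃ v : Equiv.Perm (Fin m), ∀ ipos : Fin m, ipos.val ≠ 0 →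
      ∃ (ppos : Fin m) (l : Fin n), ppos < ipos ∧ (syzGraph F d).Adj (v ppos) (v ipos) ∧
        F (v ppos) \ F (v ipos) = {l} ∧ l ∉ F (v ipos) ∧
        ∀ jpos : Fin m, jpos < ipos → l ∈ F (v jpos) := by
  intro m
  induction m with
  | zero =>
    intro F d _ _ _ _
    exact ⟨Equiv.refl _, fun ipos _ => absurd ipos.isLt (Nat.not_lt_zero _)⟩
  | succ m' IH =>
    intro F d hinj hcard htree hlc
    rcases Nat.eq_zero_or_pos m' with hm0 | hmpos
    · subst hm0
      refine ⟨Equiv.refl _, fun ipos hipos => ?_⟩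
      have := ipos.isLt
      omega
    -- at least two vertices: find a leaf q with unique neighbour p0
    have hcardV : 2 ≤ Fintype.card (Fin (m' + 1)) := by
      rw [Fintype.card_fin]
      omega
    obtain ⟨q, p0, hqp0, hleaf⟩ := exists_leaf htree hcardV
    -- the key combinatorial fact : every other generator contains l
    obtain ⟨l, hl⟩ : ∃ l, F p0 \ F q = {l} := adj_sdiff hcard hqp0
    have hlp0 : l ∈ F p0 := by
      have : l ∈ F p0 \ F q := by rw [hl]; exact Finset.mem_singleton_self _
      exact (Finset.mem_sdiff.1 this).1
    have hlq : l ∉ F q := by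
      have : l ∈ F p0 \ F q := by rw [hl]; exact Finset.mem_singleton_self _
      exact (Finset.mem_sdiff.1 this).2
    have LL : ∀ t : Fin (m' + 1), t ≠ q → l ∈ F t := by
      intro t htq
      obtain ⟨w, hw⟩ := hlc t q
      obtain ⟨z, hzadj, hzsupp⟩ := walk_penult w.reverse (fun e => htq e.symm)
      have hz : z = p0 := hleaf z hzadj
      rw [hz] at hzsupp
      have hp0supp : p0 ∈ w.support := by
        rwa [SimpleGraph.Walk.support_reverse, List.mem_reverse] at hzsupp
      have hsub : F p0 ⊆ F t ∪ F q := hw p0 hp0supp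
      rcases Finset.mem_union.1 (hsub hlp0) with h' | h'
      · exact h'
      · exact absurd h' hlq
    -- reduced system
    set F' : Fin m' → Finset (Fin n) := F ∘ q.succAbove with hF'
    have hinj' : Function.Injective F' :=
      fun x y e => Fin.succAbove_right_injective (hinj e)
    have hcard' : ∀ i, (F' i).card = d := fun i => hcard _
    have hadjiff : ∀ x y : Fin m', (syzGraph F' d).Adj x y ↔
        (syzGraph F d).Adj (q.succAbove x) (q.succAbove y) := by
      intro x y
      constructor
      · rintro ⟨h1, h2⟩
        exact ⟨fun e => h1 (Fin.succAbove_right_injective e), h2⟩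
      · rintro ⟨h1, h2⟩
        exact ⟨fun e => h1 (congrArg _ e), h2⟩
    have hlc' : LC F' d := by
      intro x y
      obtain ⟨w, hw⟩ := hlc (q.succAbove x) (q.succAbove y)
      obtain ⟨w2, hw2sub, hw2q⟩ := walk_avoid_leaf hleaf w
        (Fin.succAbove_ne q x) (Fin.succAbove_ne q y)
      obtain ⟨w', hw'⟩ := lift_walk w2 hw2q x y rfl rfl
      refine ⟨w', ?_⟩
      intro t ht
      exact hw (q.succAbove t) (hw2sub _ (hw' t ht))
    have htree' : (syzGraph F' d).IsTree := by
      constructor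
      · rw [SimpleGraph.connected_iff]
        refine ⟨?_, ⟨⟨0, hmpos⟩⟩⟩
        intro x y
        obtain ⟨w, _⟩ := hlc' x y
        exact ⟨w⟩
      · intro v c hc
        have hmap : ((c.map ⟨q.succAbove, fun hab => (hadjiff _ _).1 hab⟩).IsCycle) :=
          (SimpleGraph.Walk.map_isCycle_iff_of_injective
            Fin.succAbove_right_injective).2 hc
        exact htree.IsAcyclic _ hmap
    obtain ⟨v', hv'⟩ := IH F' d hinj' hcard' htree' hlc'
    -- assemble the permutation : first the reduced enumeration, then q last
    have hm1 : m' - 1 + 1 = m' := by omega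
    set vf : Fin (m' + 1) → Fin (m' + 1) := fun i =>
      if h : i = Fin.last m' then q else q.succAbove (v' (i.castPred h)) with hvf
    have hvlast : vf (Fin.last m') = q := by rw [hvf]; simp
    have hvcast : ∀ x : Fin m', vf (Fin.castSucc x) = q.succAbove (v' x) := by
      intro x
      have hne : Fin.castSucc x ≠ Fin.last m' := Fin.ne_of_lt (Fin.castSucc_lt_last x)
      simp only [hvf]
      rw [dif_neg hne, Fin.castPred_castSucc]
    have hvf_inj : Function.Injective vf := by
      intro x y e
      by_cases hx : x = Fin.last m' <;> by_cases hy : y = Fin.last m'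
      · rw [hx, hy]
      · exfalso
        rw [hx, hvlast] at e
        obtain ⟨y', rfl⟩ : ∃ y', Fin.castSucc y' = y := by
          refine ⟨y.castPred hy, ?_⟩
          exact Fin.castSucc_castPred y hy
        rw [hvcast] at e
        exact Fin.succAbove_ne q _ e.symm
      · exfalso
        rw [hy, hvlast] at e
        obtain ⟨x', rfl⟩ : ∃ x', Fin.castSucc x' = x := by
          refine ⟨x.castPred hx, ?_⟩
          exact Fin.castSucc_castPred x hx
        rw [hvcast] at e
        exact Fin.succAbove_ne q _ e
      · obtain ⟨x', rfl⟩ : ∃ x', Fin.castSucc x' = x := by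
          refine ⟨x.castPred hx, ?_⟩
          exact Fin.castSucc_castPred x hx
        obtain ⟨y', rfl⟩ : ∃ y', Fin.castSucc y' = y := by
          refine ⟨y.castPred hy, ?_⟩
          exact Fin.castSucc_castPred y hy
        rw [hvcast, hvcast] at e
        have := v'.injective (Fin.succAbove_right_injective e)
        rw [this]
    set v : Equiv.Perm (Fin (m' + 1)) :=
      Equiv.ofBijective vf ((Fintype.bijective_iff_injective_and_card vf).2
        ⟨hvf_inj, rfl⟩) with hv
    have hvapp : ∀ i, v i = vf i := fun i => rfl
    refine ⟨v, ?_⟩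
    intro ipos hipos
    by_cases hlast : ipos = Fin.last m'
    · -- the leaf q sits at the last position
      subst hlast
      obtain ⟨p0', hp0'⟩ := Fin.exists_succAbove_eq (fun e : p0 = q =>
        (syzGraph F d).loopless.irrefl q (e ▸ hqp0.symm))
      refine ⟨Fin.castSucc (v'.symm p0'), l, Fin.castSucc_lt_last _, ?_, ?_, ?_, ?_⟩
      · rw [hvapp, hvapp, hvlast, hvcast, Equiv.apply_symm_apply, hp0']
        exact hqp0.symm
      · rw [hvapp, hvapp, hvlast, hvcast, Equiv.apply_symm_apply, hp0']
        exact hl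
      · rw [hvapp, hvlast]
        exact hlq
      · intro jpos hjlt
        have hjne : jpos ≠ Fin.last m' := Fin.ne_of_lt hjlt
        obtain ⟨j', rfl⟩ : ∃ j', Fin.castSucc j' = jpos :=
          ⟨jpos.castPred hjne, Fin.castSucc_castPred jpos hjne⟩
        rw [hvapp, hvcast]
        exact LL _ (Fin.succAbove_ne q _)
    · -- an interior position : use the induction hypothesis
      obtain ⟨i', rfl⟩ : ∃ i', Fin.castSucc i' = ipos :=
        ⟨ipos.castPred hlast, Fin.castSucc_castPred ipos hlast⟩
      have hi'0 : i'.val ≠ 0 := by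
        intro h0
        apply hipos
        rw [← h0]
        rfl
      obtain ⟨ppos', l', hlt', hadj', hdiff', hnotin', hall'⟩ := hv' i' hi'0
      refine ⟨Fin.castSucc ppos', l', Fin.castSucc_lt_castSucc_iff.2 hlt', ?_, ?_, ?_, ?_⟩
      · rw [hvapp, hvapp, hvcast, hvcast]
        exact (hadjiff _ _).1 hadj'
      · rw [hvapp, hvapp, hvcast, hvcast]
        exact hdiff'
      · rw [hvapp, hvcast]
        exact hnotin'
      · intro jpos hjlt
        have hjne : jpos ≠ Fin.last m' :=
          Fin.ne_of_lt (lt_trans hjlt (Fin.castSucc_lt_last i'))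
        obtain ⟨j', rfl⟩ : ∃ j', Fin.castSucc j' = jpos :=
          ⟨jpos.castPred hjne, Fin.castSucc_castPred jpos hjne⟩
        rw [hvapp, hvcast]
        exact hall' j' (Fin.castSucc_lt_castSucc_iff.1 hjlt)

end Graph

section Final

variable (hinj : Function.Injective F) (hcard : ∀ i, (F i).card = d)

include hinj hcard in
theorem varDecomp_of_lc (htree : (syzGraph F d).IsTree) (hlc : LC F d) (hm : 0 < m) :
    VarDecomp ((Finset.univ : Finset (Fin m)).image (u (k := k) F)) := by
  obtain ⟨v, hv⟩ := core m F d hinj hcard htree hlc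
  have key : ∀ r : ℕ, r < m →
      VarDecomp (((Finset.univ.filter (fun jpos : Fin m => jpos.val ≤ r)).image
        (fun jpos => u (k := k) F (v jpos)))) := by
    intro r
    induction r with
    | zero =>
      intro h0
      have hset : (Finset.univ.filter (fun jpos : Fin m => jpos.val ≤ 0))
          = {(⟨0, h0⟩ : Fin m)} := by
        ext jpos
        rw [Finset.mem_filter, Finset.mem_singleton]
        constructor
        · rintro ⟨-, hle⟩
          exact Fin.ext (by show jpos.val = 0; omega)
        · rintro rfl
          exact ⟨Finset.mem_univ _, le_refl _⟩
      rw [hset, Finset.image_singleton]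
      exact VarDecomp.principal _
    | succ r ihr =>
      intro hr
      set ipos : Fin m := ⟨r + 1, hr⟩ with hipos
      have hival : ipos.val = r + 1 := rfl
      obtain ⟨ppos, l, hlt, hadj, hdiff, hnotin, hall⟩ := hv ipos (Nat.succ_ne_zero r)
      set Gr1 := (Finset.univ.filter (fun jpos : Fin m => jpos.val ≤ r + 1)).image
        (fun jpos => u (k := k) F (v jpos)) with hGr1
      have hnd : Gr1.filter (fun w => ¬ (X l : MvPolynomial (Fin n) k) ∣ w)
          = {u (k := k) F (v ipos)} := by
        ext w
        rw [Finset.mem_filter, Finset.mem_singleton]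
        constructor
        · rintro ⟨hw, hndvd⟩
          rcases Finset.mem_image.1 hw with ⟨jpos, hj, rfl⟩
          rcases Finset.mem_filter.1 hj with ⟨-, hjle⟩
          by_cases hje : jpos = ipos
          · rw [hje]
          · have hjlt : jpos < ipos := by
              rw [Fin.lt_def, hival]
              have hne2 : jpos.val ≠ r + 1 := fun e => hje (Fin.ext (by rw [e, hival]))
              omega
            exact absurd ((X_dvd_u_iff F).2 (hall jpos hjlt)) hndvd
        · intro hw
          rw [hw]
          refine ⟨Finset.mem_image.2 ⟨ipos,
            Finset.mem_filter.2 ⟨Finset.mem_univ _, le_of_eq hival⟩, rfl⟩, ?_⟩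
          rw [X_dvd_u_iff]
          exact hnotin
      have hdvd : Gr1.filter (fun w => (X l : MvPolynomial (Fin n) k) ∣ w)
          = (Finset.univ.filter (fun jpos : Fin m => jpos.val ≤ r)).image
              (fun jpos => u (k := k) F (v jpos)) := by
        ext w
        rw [Finset.mem_filter]
        constructor
        · rintro ⟨hw, hdv⟩
          rcases Finset.mem_image.1 hw with ⟨jpos, hj, rfl⟩
          rcases Finset.mem_filter.1 hj with ⟨-, hjle⟩
          have hjne : jpos ≠ ipos := by
            intro e
            rw [e, X_dvd_u_iff] at hdv
            exact hnotin hdv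
          have hjler : jpos.val ≤ r := by
            have hne2 : jpos.val ≠ r + 1 := fun e => hjne (Fin.ext (by rw [e, hival]))
            omega
          exact Finset.mem_image.2 ⟨jpos,
            Finset.mem_filter.2 ⟨Finset.mem_univ _, hjler⟩, rfl⟩
        · intro hw
          rcases Finset.mem_image.1 hw with ⟨jpos, hj, rfl⟩
          rcases Finset.mem_filter.1 hj with ⟨-, hjle⟩
          have hjlt : jpos < ipos := by
            rw [Fin.lt_def, hival]
            omega
          refine ⟨Finset.mem_image.2 ⟨jpos,
            Finset.mem_filter.2 ⟨Finset.mem_univ _, by omega⟩, rfl⟩,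
            (X_dvd_u_iff F).2 (hall jpos hjlt)⟩
      apply VarDecomp.shed _ l
      · rw [hnd]
        exact ⟨_, Finset.mem_singleton_self _⟩
      · intro w hw
        rw [hnd, Finset.mem_singleton] at hw
        rw [hw]
        refine ⟨u (k := k) F (v ppos), ?_, ?_⟩
        · rw [hdvd]
          refine Finset.mem_image.2 ⟨ppos, Finset.mem_filter.2 ⟨Finset.mem_univ _, ?_⟩, rfl⟩
          have := Fin.lt_def.1 hlt
          rw [hival] at this
          omega
        · exact colon_singleton_eq hdiff hnotin
      · rw [hnd]
        exact VarDecomp.principal _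
      · rw [hdvd]
        exact ihr (by omega)
  have hfilter_univ : (Finset.univ.filter (fun jpos : Fin m => jpos.val ≤ m - 1))
      = (Finset.univ : Finset (Fin m)) := by
    ext jpos
    rw [Finset.mem_filter]
    have := jpos.isLt
    constructor
    · rintro ⟨h1, -⟩; exact h1
    · intro h1; exact ⟨h1, by omega⟩
  have hres := key (m - 1) (by omega)
  rw [hfilter_univ] at hres
  have himg : Finset.univ.image (fun jpos : Fin m => u (k := k) F (v jpos))
      = Finset.univ.image (u (k := k) F) := by
    ext w
    simp only [Finset.mem_image]
    constructor
    · rintro ⟨j, -, rfl⟩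
      exact ⟨v j, Finset.mem_univ _, rfl⟩
    · rintro ⟨i, -, rfl⟩
      exact ⟨v.symm i, Finset.mem_univ _, by rw [Equiv.apply_symm_apply]⟩
  rwa [himg] at hres

include hinj hcard in
theorem linQuot_of_lc (htree : (syzGraph F d).IsTree) (hlc : LC F d) :
    LinQuot (fun i : Fin m => ∏ l ∈ F i, (X l : MvPolynomial (Fin n) k)) := by
  have hu : (fun i : Fin m => ∏ l ∈ F i, (X l : MvPolynomial (Fin n) k)) = u F :=
    funext fun i => u_eq_prod F i
  rw [hu]
  obtain ⟨v, hv⟩ := core m F d hinj hcard htree hlc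
  refine ⟨v, ?_⟩
  intro i hi
  obtain ⟨ppos, l, hlt, hadj, hdiff, hnotin, hall⟩ := hv i hi
  refine ⟨{l}, ?_⟩
  rw [Set.image_singleton]
  apply le_antisymm
  · intro f hf
    rw [Ideal.mem_colon_span_singleton] at hf
    have himg : ((fun j => u (k := k) F (v j)) '' {j : Fin m | j < i})
        = (fun j => u (k := k) F j) '' (v '' {j : Fin m | j < i}) := by
      rw [Set.image_image]
    rw [himg, mem_span_u_image] at hf
    rw [Ideal.mem_span_singleton, X, monomial_dvd_iff]
    intro e he
    have he2 := hf (e + D (F (v i))) (by rw [u]; exact mem_support_mul_monomial he)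
    obtain ⟨j, hj, hle⟩ := he2
    obtain ⟨jpos, hjlt, rfl⟩ := hj
    have hlj : l ∈ F (v jpos) := hall jpos hjlt
    have hcoord := hle l
    rw [Finsupp.add_apply, D_apply, D_apply, if_pos hlj, if_neg hnotin] at hcoord
    rw [Finsupp.single_le_iff]
    omega
  · rw [Ideal.span_le, Set.singleton_subset_iff, SetLike.mem_coe, Ideal.mem_colon_span_singleton]
    have hXlu : (X l : MvPolynomial (Fin n) k) * u F (v i)
        = monomial (D (F (v i) \ F (v ppos))) 1 * u F (v ppos) := by
      rw [X, u, u, monomial_mul_monomial, monomial_mul_monomial]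
      congr 1
      rw [← D_singleton, D_add_D _ _ (by simpa using hnotin),
        D_add_D _ _ Finset.sdiff_disjoint, Finset.sdiff_union_self_eq_union]
      have hsets : ({l} : Finset (Fin n)) ∪ F (v i) = F (v i) ∪ F (v ppos) := by
        rw [Finset.union_comm]
        exact (adj_union hdiff).symm
      rw [hsets]
    rw [hXlu]
    apply Ideal.mul_mem_left
    apply Ideal.subset_span
    exact ⟨ppos, hlt, rfl⟩

end Final

end Main
end Stmt11Aux


open Stmt11Aux in
/-- Suppose `G_I` is a tree. Then the following are equivalent:
(i) `I` has linear relations; (ii) `I` is variable-decomposable; (iii) `I` has linear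
quotients. -/
theorem stmt11 {k : Type*} [Field k] {n m d : ℕ}
    (F : Fin m → Finset (Fin n)) (hinj : Function.Injective F)
    (hcard : ∀ i, (F i).card = d)
    (htree : (syzGraph F d).IsTree) :
    (HasLinRel (fun i : Fin m => ∏ l ∈ F i, (X l : MvPolynomial (Fin n) k)) ↔
      VarDecomp (Finset.image (fun i : Fin m => ∏ l ∈ F i, (X l : MvPolynomial (Fin n) k))
        Finset.univ)) ∧
    (HasLinRel (fun i : Fin m => ∏ l ∈ F i, (X l : MvPolynomial (Fin n) k)) ↔
      LinQuot (fun i : Fin m => ∏ l ∈ F i, (X l : MvPolynomial (Fin n) k))) := by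
  have hm : 0 < m := by
    obtain ⟨i⟩ := htree.isConnected.nonempty
    exact i.pos
  have hu : (fun i : Fin m => ∏ l ∈ F i, (X l : MvPolynomial (Fin n) k)) = u F :=
    funext fun i => u_eq_prod F i
  constructor
  · constructor
    · intro h
      rw [hu] at h
      have hlc := lc_of_hasLinRel hinj hcard h
      have hres := varDecomp_of_lc (k := k) hinj hcard htree hlc hm
      rw [hu]
      exact hres
    · intro h
      rw [hu]
      exact hasLinRel_of_lc hinj hcard (lc_of_varDecomp hinj hcard h)
  · constructor
    · intro h
      rw [hu] at h
      exact linQuot_of_lc hinj hcard htree (lc_of_hasLinRel hinj hcard h)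
    · intro h
      rw [hu]
      exact hasLinRel_of_lc hinj hcard (lc_of_linQuot hinj hcard h)
end

section
/- Assume the syzygy graph G_I is a tree and I has linear relations. Then every ordering u_{r_1},…,u_{r_m} of the minimal generators of I with the property that, for each t with 1 ≤ t ≤ m, the induced subgraph of G_I on {u_{r_1},…,u_{r_t}} is connected, is an admissible order: for every t ≥ 2 the colon ideal (u_{r_1},…,u_{r_{t−1}}) : u_{r_t} is generated by a subset of the variables {x_1,…,x_n}. -/
open MvPolynomial Finset

attribute [local instance] Classical.propDecidable

/-!
Linear relations force, for any two generators `u i`, `u j`, a walk in the syzygy graph from `u i`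
to `u j` through generators whose supports lie in `F i ∪ F j`. Otherwise let `C` be the set of
generators reachable from `u i` by such walks and kill the variables outside `F i ∪ F j`: the map
`w ↦ ∑_{v ∈ C} w v * u v` sends every linear syzygy to zero but the Koszul syzygy
`u j • e i - u i • e j` to the nonzero `u i * u j`.

In a tree the path from `u (σ i)` to an earlier `u (σ j)` is unique, so when initial segments are
connected it lies both in the initial segment and among the generators supported in
`F (σ i) ∪ F (σ j)`. Its first step is an earlier generator `u c = x_l * u (σ i) / x_l'` with
`l ∈ F (σ j) \ F (σ i)`. Hence every earlier generator is divisible by a variable `x_l` with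
`x_l * u (σ i)` in the earlier ideal, which for a monomial ideal means that the colon ideal is
generated by these variables.
-/

namespace MvPolynomial

variable {σ R : Type*} [CommSemiring R] [DecidableEq σ]

theorem prod_X_eq_monomial (F : Finset σ) :
    ∏ l ∈ F, (X l : MvPolynomial σ R) = monomial (Multiset.toFinsupp F.val) 1 := by
  induction F using Finset.induction_on with
  | empty => simp
  | insert a F ha ih =>
    rw [Finset.prod_insert ha, ih, Finset.insert_val_of_notMem ha, ← Multiset.singleton_add,
      map_add, Multiset.toFinsupp_singleton, X, monomial_mul, one_mul]

theorem card_inter_add_one_of_X_mul_prod_X_eq [Nontrivial R] {a b : σ} {F G : Finset σ}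
    (hFG : F ≠ G) (h : X a * ∏ l ∈ F, (X l : MvPolynomial σ R) = X b * ∏ l ∈ G, X l) :
    (F ∩ G).card + 1 = F.card := by
  have hval : a ::ₘ F.val = b ::ₘ G.val := by
    rw [prod_X_eq_monomial, prod_X_eq_monomial, X, X, monomial_mul, monomial_mul, one_mul,
      ← Multiset.toFinsupp_singleton, ← Multiset.toFinsupp_singleton, ← map_add, ← map_add] at h
    simpa using Multiset.toFinsupp.injective (monomial_left_injective one_ne_zero h)
  obtain ⟨rfl, hFG'⟩ | ⟨hab, cs, hF, hG⟩ := Multiset.cons_eq_cons.1 hval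
  · exact absurd (Finset.val_inj.1 hFG') hFG
  have hbcs : b ∉ cs := (Multiset.nodup_cons.1 (hF ▸ F.nodup)).1
  have hbF : b ∈ F := by rw [← Finset.mem_val, hF]; exact Multiset.mem_cons_self b cs
  have : F ∩ G = F.erase b := by
    ext x
    rw [Finset.mem_inter, Finset.mem_erase, ← Finset.mem_val, ← Finset.mem_val, hF, hG,
      Multiset.mem_cons, Multiset.mem_cons]
    grind
  rw [this, Finset.card_erase_add_one hbF]

theorem colon_span_prod_X_eq_span_X_image {ι : Type*} (G : ι → Finset σ) (s : Set ι)
    (H : Finset σ)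
    (h : ∀ j ∈ s, ∃ l ∈ G j, l ∉ H ∧ X l * ∏ l' ∈ H, (X l' : MvPolynomial σ R) ∈
      Ideal.span ((fun j => ∏ l' ∈ G j, X l') '' s)) :
    Submodule.colon (Ideal.span ((fun j => ∏ l ∈ G j, (X l : MvPolynomial σ R)) '' s))
        (Ideal.span {∏ l ∈ H, (X l : MvPolynomial σ R)}) =
      Ideal.span (X '' {l | X l * ∏ l' ∈ H, (X l' : MvPolynomial σ R) ∈
        Ideal.span ((fun j => ∏ l' ∈ G j, X l') '' s)}) := by
  refine le_antisymm (fun f hf => ?_) (Ideal.span_le.2 ?_)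
  · rw [Ideal.mem_colon_span_singleton] at hf
    rw [mem_ideal_span_X_image]
    intro β hβ
    have hJ : (fun j => ∏ l ∈ G j, (X l : MvPolynomial σ R)) '' s =
        (fun e => monomial e 1) '' ((fun j => Multiset.toFinsupp (G j).val) '' s) := by
      simp only [Set.image_image, prod_X_eq_monomial]
    rw [hJ, prod_X_eq_monomial, mem_ideal_span_monomial_image] at hf
    obtain ⟨_, ⟨j, hj, rfl⟩, hle⟩ := hf (β + Multiset.toFinsupp H.val) <| by
      rw [mem_support_iff, coeff_mul_monomial, mul_one]
      exact mem_support_iff.1 hβ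
    obtain ⟨l, hlG, hlH, hlJ⟩ := h j hj
    refine ⟨l, hlJ, ?_⟩
    have := hle l
    simp only [Finsupp.add_apply, Multiset.toFinsupp_apply, Multiset.count_eq_of_nodup (G j).nodup,
      Multiset.count_eq_of_nodup H.nodup, Finset.mem_val, hlG, hlH, ↓reduceIte] at this
    omega
  · rintro _ ⟨l, hl, rfl⟩
    exact Ideal.mem_colon_span_singleton.2 hl

end MvPolynomial

namespace SimpleGraph

variable {V : Type*} {G : SimpleGraph V}

theorem Reachable.exists_walk_support_subset_of_induce {s : Set V} {a b : s}
    (h : (G.induce s).Reachable a b) : ∃ p : G.Walk a b, ∀ v ∈ p.support, v ∈ s := by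
  obtain ⟨w⟩ := h
  refine ⟨w.map (Embedding.induce s).toHom, fun v hv => ?_⟩
  obtain ⟨x, -, rfl⟩ := List.mem_map.1 (Walk.support_map _ w ▸ hv)
  exact x.2

theorem IsAcyclic.exists_adj_mem_support_of_ne (hG : G.IsAcyclic) {a b : V} (hab : a ≠ b)
    (p q : G.Walk a b) : ∃ c, G.Adj a c ∧ c ∈ p.support ∧ c ∈ q.support := by
  have hpq : p.toPath = q.toPath := (hG.subsingleton_path a b).elim _ _
  have hsnd := p.toPath.1.getVert_mem_support 1
  refine ⟨p.toPath.1.snd, Walk.adj_snd (Walk.not_nil_of_ne hab),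
    p.support_toPath_subset_support hsnd, q.support_toPath_subset_support ?_⟩
  rwa [← hpq]

end SimpleGraph

theorem phi_single {R : Type*} [CommRing R] {ι : Type*} [Fintype ι] [DecidableEq ι] (u : ι → R)
    (i : ι) (x : R) : phi u (Pi.single i x) = x * u i := by
  simp [phi, Pi.single_apply]

theorem HasLinRel.mul_mem_of_crossing {k : Type*} [Field k] {n : ℕ} {ι : Type*} [Fintype ι] [DecidableEq ι]
    {u : ι → MvPolynomial (Fin n) k} (hlin : HasLinRel u) (P : Ideal (MvPolynomial (Fin n) k))
    (C : Set ι)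
    (hP : ∀ i j a b, X a * u i = X b * u j → i ∈ C → j ∉ C → X a * u i ∈ P)
    {i j : ι} (hi : i ∈ C) (hj : j ∉ C) : u i * u j ∈ P := by
  have hle : LinearMap.ker (phi u) ≤ Submodule.comap (phi (C.indicator u)) P := by
    rw [← hlin, Submodule.span_le]
    rintro _ ⟨i', j', a, b, hab, rfl⟩
    simp only [SetLike.mem_coe, Submodule.mem_comap, map_sub, phi_single]
    by_cases hi' : i' ∈ C <;> by_cases hj' : j' ∈ C <;>
      simp only [Set.indicator_of_mem, Set.indicator_of_notMem, hi', hj', not_false_eq_true,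
        mul_zero, sub_zero, zero_sub, neg_mem_iff]
    · rw [hab, sub_self]; exact P.zero_mem
    · exact hP i' j' a b hab hi' hj'
    · exact hP j' i' b a hab.symm hj' hi'
    · exact P.zero_mem
  have hkoszul : Pi.single i (u j) - Pi.single j (u i) ∈ LinearMap.ker (phi u) := by
    rw [LinearMap.mem_ker, map_sub, phi_single, phi_single, mul_comm, sub_self]
  simpa [phi_single, hi, hj, mul_comm] using hle hkoszul

namespace syzGraph

variable {n m d : ℕ} {F : Fin m → Finset (Fin n)}

theorem exists_dvd_X_mul_of_adj {R : Type*} [CommSemiring R] {i j : Fin m}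
    (hi : (F i).card = d) (h : (syzGraph F d).Adj i j) :
    ∃ l ∈ F i, l ∉ F j ∧ (∏ l ∈ F i, (X l : MvPolynomial (Fin n) R)) ∣ X l * ∏ l ∈ F j, X l := by
  have hcard : (F i \ F j).card = 1 := by
    have := Finset.card_sdiff_add_card_inter (F i) (F j)
    have := h.2
    omega
  obtain ⟨l, hl⟩ := Finset.card_eq_one.1 hcard
  have hlij : l ∈ F i \ F j := hl ▸ Finset.mem_singleton_self l
  rw [Finset.mem_sdiff] at hlij
  refine ⟨l, hlij.1, hlij.2, ?_⟩
  rw [← Finset.prod_insert hlij.2]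
  refine Finset.prod_dvd_prod_of_subset _ _ _ ?_
  rw [Finset.insert_eq]
  exact sdiff_le_iff'.1 hl.le

theorem exists_walk_support_subset_union_of_hasLinRel {k : Type*} [Field k] (hinj : Function.Injective F)
    (hcard : ∀ i, (F i).card = d)
    (hlin : HasLinRel (fun i : Fin m => ∏ l ∈ F i, (X l : MvPolynomial (Fin n) k))) (i j : Fin m) :
    ∃ p : (syzGraph F d).Walk i j, ∀ v ∈ p.support, F v ⊆ F i ∪ F j := by
  set A := F i ∪ F j
  set π : MvPolynomial (Fin n) k →ₐ[k] MvPolynomial (Fin n) k :=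
    aeval fun l => if l ∈ A then X l else 0
  set C : Set (Fin m) := {v | ∃ p : (syzGraph F d).Walk i v, ∀ w ∈ p.support, F w ⊆ A}
  have hX : ∀ l ∉ A, X l ∈ RingHom.ker π := fun l hl => by simp [π, hl]
  have hsupp : ∀ (a : Fin n) (v : Fin m), X a * ∏ l ∈ F v, X l ∉ RingHom.ker π → F v ⊆ A := by
    intro a v hv l hl
    by_contra hlA
    exact hv (Ideal.mem_of_dvd _ (dvd_mul_of_dvd_right (Finset.dvd_prod_of_mem _ hl) _) (hX l hlA))
  have hcross : ∀ v w a b, X a * ∏ l ∈ F v, (X l : MvPolynomial (Fin n) k) =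
      X b * ∏ l ∈ F w, X l → v ∈ C → w ∉ C → X a * ∏ l ∈ F v, X l ∈ RingHom.ker π := by
    intro v w a b hab hv hw
    by_contra hker
    have hvw : v ≠ w := fun h => hw (h ▸ hv)
    have hadj : (syzGraph F d).Adj v w :=
      ⟨hvw, hcard v ▸ card_inter_add_one_of_X_mul_prod_X_eq (hinj.ne hvw) hab⟩
    obtain ⟨p, hp⟩ := hv
    refine hw ⟨p.concat hadj, fun x hx => ?_⟩
    rw [SimpleGraph.Walk.support_concat, List.mem_append, List.mem_singleton] at hx
    rcases hx with hx | rfl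
    · exact hp x hx
    · exact hsupp b x (hab ▸ hker)
  have hπ : ∀ v, F v ⊆ A → π (∏ l ∈ F v, X l) = ∏ l ∈ F v, X l := fun v hv => by
    rw [map_prod]
    exact Finset.prod_congr rfl fun l hl => by simp [π, hv hl]
  by_contra hj
  have hmem := hlin.mul_mem_of_crossing (RingHom.ker π) C hcross ⟨.nil, by simp [A]⟩ hj
  rw [RingHom.mem_ker, map_mul, hπ i Finset.subset_union_left,
    hπ j Finset.subset_union_right] at hmem
  exact mul_ne_zero (Finset.prod_ne_zero_iff.2 fun l _ => X_ne_zero l)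
    (Finset.prod_ne_zero_iff.2 fun l _ => X_ne_zero l) hmem

theorem exists_dvd_X_mul_of_isAcyclic {k : Type*} [Field k] (hinj : Function.Injective F)
    (hcard : ∀ i, (F i).card = d) (hacyc : (syzGraph F d).IsAcyclic)
    (hlin : HasLinRel (fun i : Fin m => ∏ l ∈ F i, (X l : MvPolynomial (Fin n) k)))
    {i j : Fin m} (hij : i ≠ j) (p : (syzGraph F d).Walk i j) :
    ∃ c ∈ p.support, c ≠ i ∧ ∃ l ∈ F j, l ∉ F i ∧
      (∏ l ∈ F c, (X l : MvPolynomial (Fin n) k)) ∣ X l * ∏ l ∈ F i, X l := by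
  obtain ⟨q, hq⟩ := exists_walk_support_subset_union_of_hasLinRel hinj hcard hlin i j
  obtain ⟨c, hadj, hcq, hcp⟩ := hacyc.exists_adj_mem_support_of_ne hij q p
  obtain ⟨l, hlc, hli, hdvd⟩ := exists_dvd_X_mul_of_adj (R := k) (hcard c) hadj.symm
  exact ⟨c, hcp, hadj.ne.symm, l, (Finset.mem_union.1 (hq c hcq hlc)).resolve_left hli, hli, hdvd⟩

end syzGraph

/-- Suppose `G_I` is a tree and `I` has linear relations. Then every ordering
`u (σ 0), …, u (σ (m-1))` of the generators such that each initial segment induces a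
connected subgraph of `G_I` is an admissible order: every colon ideal
`(u (σ 0), …, u (σ (t-1))) : u (σ t)` is generated by a subset of the variables. -/
theorem stmt12 {k : Type*} [Field k] {n m d : ℕ}
    (F : Fin m → Finset (Fin n)) (hinj : Function.Injective F)
    (hcard : ∀ i, (F i).card = d)
    (htree : (syzGraph F d).IsTree)
    (hlin : HasLinRel (fun i : Fin m => ∏ l ∈ F i, (X l : MvPolynomial (Fin n) k)))
    (σ : Equiv.Perm (Fin m))
    (hconn : ∀ t : ℕ, 1 ≤ t → t ≤ m →
      ((syzGraph F d).induce {i : Fin m | ∃ j : Fin m, j.val < t ∧ σ j = i}).Connected) :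
    ∀ i : Fin m, i.val ≠ 0 →
      ∃ T : Set (Fin n),
        Submodule.colon
          (Ideal.span ((fun j : Fin m =>
              ∏ l ∈ F (σ j), (X l : MvPolynomial (Fin n) k)) '' {j : Fin m | j < i}))
          (Ideal.span {∏ l ∈ F (σ i), (X l : MvPolynomial (Fin n) k)}) =
        Ideal.span (X '' T) := by
  intro i _
  refine ⟨_, colon_span_prod_X_eq_span_X_image _ _ _ fun j (hj : j < i) => ?_⟩
  obtain ⟨p, hp⟩ := ((hconn (i + 1) (by omega) i.isLt).preconnected
    ⟨σ i, i, by omega, rfl⟩ ⟨σ j, j, by omega, rfl⟩).exists_walk_support_subset_of_induce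
  obtain ⟨c, hcp, hci, l, hlj, hli, hdvd⟩ := syzGraph.exists_dvd_X_mul_of_isAcyclic hinj hcard
    htree.isAcyclic hlin (σ.injective.ne hj.ne') p
  obtain ⟨j', hj', rfl⟩ := hp c hcp
  have hj'i : j' ≠ i := fun h => hci (h ▸ rfl)
  refine ⟨l, hlj, hli, Ideal.mem_of_dvd _ hdvd (Ideal.subset_span ⟨j', ?_, rfl⟩)⟩
  exact Fin.lt_def.2 (by have := Fin.val_ne_of_ne hj'i; omega)
end

section
/- Assume the syzygy graph G_I contains no cycle of length 3. Then every edge of G_I is a face of the Scarf complex Δ_I; explicitly, if u_i and u_j are adjacent in G_I and σ ⊆ {1,…,m} satisfies ⋃_{r∈σ} F(u_r) = F(u_i) ∪ F(u_j), then σ = {i, j}. -/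
open MvPolynomial Finset

attribute [local instance] Classical.propDecidable

/-!
All supports indexed by `σ` lie in `F i ∪ F j`, which has `d + 1` elements, and two distinct
`d`-subsets of a `(d + 1)`-set share `d - 1` elements. Hence any `r ∈ σ` other than `i, j` is
adjacent to both, and `{i, j, r}` is a triangle. Conversely `σ ⊆ {i, j}` must contain both `i`
and `j`, since neither of `F i`, `F j` contains the other.
-/

namespace Finset

variable {α : Type*} [DecidableEq α]

theorem card_inter_add_one_of_subset_of_card_eq_succ {d : ℕ} {s t u : Finset α}
    (hs : #s = d) (ht : #t = d) (hst : s ≠ t) (hsu : s ⊆ u) (htu : t ⊆ u) (hu : #u = d + 1) :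
    #(s ∩ t) + 1 = d := by
  have hlt : d < #(s ∪ t) := by
    rw [← hs]
    refine card_lt_card (ssubset_of_subset_of_ne subset_union_left fun h => hst ?_)
    exact (eq_of_subset_of_card_le (union_eq_left.mp h.symm) (by rw [hs, ht])).symm
  have hle : #(s ∪ t) ≤ d + 1 := hu ▸ card_le_card (union_subset hsu htu)
  have := card_union_add_card_inter s t
  omega

theorem mem_of_biUnion_eq_union_of_subset_pair {ι : Type*} [DecidableEq ι] {F : ι → Finset α}
    {σ : Finset ι} {i j : ι} (hσ : σ ⊆ {i, j}) (hcover : σ.biUnion F = F i ∪ F j)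
    (hij : ¬ F i ⊆ F j) : i ∈ σ := by
  by_contra hi
  have hσj : σ ⊆ {j} := fun r hr => by
    rcases mem_insert.mp (hσ hr) with rfl | hrj
    · exact absurd hr hi
    · exact hrj
  apply hij
  calc F i ⊆ σ.biUnion F := hcover ▸ subset_union_left
    _ ⊆ ({j} : Finset ι).biUnion F := biUnion_subset_biUnion_of_subset_left F hσj
    _ = F j := singleton_biUnion

end Finset

section SyzygyGraph

variable {n m d : ℕ} {F : Fin m → Finset (Fin n)}

theorem card_union_eq_of_syzGraph_adj (hcard : ∀ i, #(F i) = d) {i j : Fin m}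
    (hadj : (syzGraph F d).Adj i j) : #(F i ∪ F j) = d + 1 := by
  have := card_union_add_card_inter (F i) (F j)
  rw [hcard, hcard] at this
  have := hadj.2
  omega

theorem syzGraph_adj_of_subset (hinj : Function.Injective F) (hcard : ∀ i, #(F i) = d)
    {u : Finset (Fin n)} (hu : #u = d + 1) {a b : Fin m} (hab : a ≠ b) (ha : F a ⊆ u)
    (hb : F b ⊆ u) : (syzGraph F d).Adj a b :=
  ⟨hab, card_inter_add_one_of_subset_of_card_eq_succ (hcard a) (hcard b) (hinj.ne hab) ha hb hu⟩

theorem subset_pair_of_biUnion_eq_union (hinj : Function.Injective F)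
    (hcard : ∀ i, #(F i) = d) (hc3 : (syzGraph F d).CliqueFree 3) {i j : Fin m}
    (hadj : (syzGraph F d).Adj i j) {σ : Finset (Fin m)} (hcover : σ.biUnion F = F i ∪ F j) :
    σ ⊆ {i, j} := by
  intro r hr
  by_contra hrij
  simp only [mem_insert, mem_singleton, not_or] at hrij
  have hu := card_union_eq_of_syzGraph_adj hcard hadj
  have hFr : F r ⊆ F i ∪ F j := hcover ▸ subset_biUnion_of_mem F hr
  have adj_r {a : Fin m} (ha : F a ⊆ F i ∪ F j) (hra : r ≠ a) : (syzGraph F d).Adj a r :=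
    syzGraph_adj_of_subset hinj hcard hu hra.symm ha hFr
  exact hc3 {i, j, r} (SimpleGraph.is3Clique_triple_iff.mpr
    ⟨hadj, adj_r subset_union_left hrij.1, adj_r subset_union_right hrij.2⟩)

end SyzygyGraph

theorem stmt13_general {n m d : ℕ}
    (F : Fin m → Finset (Fin n)) (hinj : Function.Injective F)
    (hcard : ∀ i, (F i).card = d)
    (hc3 : (syzGraph F d).CliqueFree 3) :
    ∀ i j : Fin m, (syzGraph F d).Adj i j →
      ∀ σ : Finset (Fin m), σ.biUnion F = F i ∪ F j → σ = {i, j} := by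
  intro i j hadj σ hcover
  have hsub : σ ⊆ {i, j} := subset_pair_of_biUnion_eq_union hinj hcard hc3 hadj hcover
  have not_subset {a b : Fin m} (hab : a ≠ b) : ¬ F a ⊆ F b := fun h =>
    hinj.ne hab (eq_of_subset_of_card_le h (by rw [hcard, hcard]))
  refine hsub.antisymm (insert_subset_iff.mpr ⟨?_, singleton_subset_iff.mpr ?_⟩)
  · exact mem_of_biUnion_eq_union_of_subset_pair hsub hcover (not_subset hadj.ne)
  · rw [pair_comm] at hsub
    rw [union_comm] at hcover
    exact mem_of_biUnion_eq_union_of_subset_pair hsub hcover (not_subset hadj.ne.symm)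

/-- Suppose `G_I` has no cycle of length 3 (is triangle-free). Then every
edge of `G_I` is a face of the Scarf complex `Δ_I`: if `u i` and `u j` are adjacent and
`σ ⊆ {0,…,m-1}` satisfies `⋃_{r ∈ σ} F r = F i ∪ F j` (i.e. `lcm_σ = lcm_{i,j}`), then
`σ = {i, j}`. -/
theorem stmt13 {k : Type*} [Field k] {n m d : ℕ}
    (F : Fin m → Finset (Fin n)) (hinj : Function.Injective F)
    (hcard : ∀ i, (F i).card = d)
    (hc3 : (syzGraph F d).CliqueFree 3) :
    ∀ i j : Fin m, (syzGraph F d).Adj i j →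
      ∀ σ : Finset (Fin m), σ.biUnion F = F i ∪ F j → σ = {i, j} :=
  stmt13_general F hinj hcard hc3
end
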